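/- arXiv:math/0406577 — 6 statements merged into one kernel-verified Lean document; each statement's English description precedes it below -/
import Mathlib

section
/- Let (A,A*) be a Leonard pair on V, where V has dimension d+1. Then A has d+1 distinct eigenvalues, all contained in K; that is, the minimal polynomial of A has degree d+1 and splits over K with distinct roots. The same conclusion holds for A*. -/
open Polynomial

/-- A square matrix is irreducible tridiagonal if every entry at distance greater than `1`
from the main diagonal is zero, and every entry at distance exactly `1` from the main
diagonal is nonzero. -/
def IrredTridiag {n : ℕ} {K : Type*} [Field K] (M : Matrix (Fin n) (Fin n) K) : Prop :=
  (∀ i j : Fin n, (1 : ℤ) < |((i : ℕ) : ℤ) - ((j : ℕ) : ℤ)| → M i j = 0) ∧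
  (∀ i j : Fin n, |((i : ℕ) : ℤ) - ((j : ℕ) : ℤ)| = 1 → M i j ≠ 0)

section Aux

variable {K : Type*} [Field K] {n : ℕ}

lemma pow_apply_zero_of_tridiag {M : Matrix (Fin n) (Fin n) K}
    (h0 : ∀ i j : Fin n, (1 : ℤ) < |((i : ℕ) : ℤ) - ((j : ℕ) : ℤ)| → M i j = 0) :
    ∀ (k : ℕ) (i l : Fin n), (l : ℕ) + k < (i : ℕ) → (M ^ k) i l = 0 := by
  intro k
  induction k with
  | zero =>
    intro i l hl
    have hne : i ≠ l := fun h => by subst h; omega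
    simp [pow_zero, Matrix.one_apply_ne hne]
  | succ k ih =>
    intro i l hl
    rw [pow_succ', Matrix.mul_apply]
    apply Finset.sum_eq_zero
    intro m _
    by_cases hm : (l : ℕ) + k < (m : ℕ)
    · rw [ih m l hm, mul_zero]
    · have : M i m = 0 := by
        apply h0
        have : (m : ℕ) + 1 < (i : ℕ) := by omega
        have hmi : ((m : ℕ) : ℤ) + 1 < ((i : ℕ) : ℤ) := by exact_mod_cast this
        rw [abs_of_pos] <;> omega

      rw [this, zero_mul]

lemma pow_apply_ne_zero_of_tridiag {M : Matrix (Fin n) (Fin n) K}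
    (h0 : ∀ i j : Fin n, (1 : ℤ) < |((i : ℕ) : ℤ) - ((j : ℕ) : ℤ)| → M i j = 0)
    (h1 : ∀ i j : Fin n, |((i : ℕ) : ℤ) - ((j : ℕ) : ℤ)| = 1 → M i j ≠ 0) :
    ∀ (k : ℕ) (hk : k < n) (h0n : 0 < n), (M ^ k) ⟨k, hk⟩ ⟨0, h0n⟩ ≠ 0 := by
  intro k
  induction k with
  | zero =>
    intro hk h0n
    simp [Matrix.one_apply]
  | succ k ih =>
    intro hk h0n
    rw [pow_succ', Matrix.mul_apply]
    rw [Finset.sum_eq_single (⟨k, by omega⟩ : Fin n)]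
    · refine mul_ne_zero (h1 _ _ ?_) (ih (by omega) h0n)
      simp only [Fin.val_mk]
      rw [abs_of_pos] <;> push_cast <;> omega
    · intro m _ hm
      by_cases hmk : (m : ℕ) ≤ k
      · have hmk' : (m : ℕ) < k := by
          rcases lt_or_eq_of_le hmk with h | h
          · exact h
          · exfalso; apply hm; ext; simp [h]
        have : M ⟨k + 1, hk⟩ m = 0 := by
          apply h0
          simp only [Fin.val_mk]
          rw [abs_of_pos] <;> push_cast <;> omega
        rw [this, zero_mul]
      · have : (M ^ k) m ⟨0, h0n⟩ = 0 :=
          pow_apply_zero_of_tridiag h0 k m ⟨0, h0n⟩ (by simp only [Fin.val_mk]; omega)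
        rw [this, mul_zero]
    · intro h
      exact absurd (Finset.mem_univ _) h

/-- An irreducible tridiagonal matrix has minimal polynomial of degree at least `n`. -/
lemma le_natDegree_minpoly_of_irredTridiag {M : Matrix (Fin n) (Fin n) K}
    (hM : IrredTridiag M) : n ≤ (minpoly K M).natDegree := by
  by_contra hlt
  push_neg at hlt
  obtain ⟨h0, h1⟩ := hM
  set p := minpoly K M with hp
  have hint : IsIntegral K M := Algebra.IsIntegral.isIntegral M
  have hpne : p ≠ 0 := minpoly.ne_zero hint
  have hmon : p.Monic := minpoly.monic hint
  set k := p.natDegree with hk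
  have hkn : k < n := hlt
  have h0n : 0 < n := lt_of_le_of_lt (Nat.zero_le k) hkn
  have haev : Polynomial.aeval M p = 0 := minpoly.aeval K M
  rw [Polynomial.aeval_eq_sum_range] at haev
  have hentry := congrFun (congrFun haev ⟨k, hkn⟩) ⟨0, h0n⟩
  rw [show ((0 : Matrix (Fin n) (Fin n) K)) (⟨k, hkn⟩ : Fin n) (⟨0, h0n⟩ : Fin n) = 0 from rfl]
    at hentry
  rw [Matrix.sum_apply] at hentry
  rw [Finset.sum_eq_single k] at hentry
  · have hne : (M ^ k) ⟨k, hkn⟩ ⟨0, h0n⟩ ≠ 0 :=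
      pow_apply_ne_zero_of_tridiag h0 h1 k hkn h0n
    have hlc : p.coeff k ≠ 0 := by
      rw [hk]; exact hmon.coeff_natDegree ▸ one_ne_zero
    exact (mul_ne_zero hlc hne) (by simpa using hentry)
  · intro j hj hjk
    have hjk' : j < k := by
      simp only [Finset.mem_range] at hj; omega
    have : (M ^ j) ⟨k, hkn⟩ ⟨0, h0n⟩ = 0 :=
      pow_apply_zero_of_tridiag h0 j _ _ (by simp; omega)
    simp [this]
  · intro h
    exact absurd (Finset.self_mem_range_succ k) h

/-- Structure of the minimal polynomial of a diagonal matrix whose minimal polynomial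
has degree at least `n`. -/
lemma minpoly_of_isDiag {M : Matrix (Fin n) (Fin n) K} (hM : M.IsDiag)
    (hdeg : n ≤ (minpoly K M).natDegree) :
    ∃ θ : Fin n → K, Function.Injective θ ∧ minpoly K M = ∏ i, (X - C (θ i)) := by
  classical
  set θ : Fin n → K := fun i => M i i with hθ
  have hMdiag : M = Matrix.diagonal θ := by
    ext i j
    by_cases h : i = j
    · subst h; simp [Matrix.diagonal_apply_eq, hθ]
    · rw [hM h, Matrix.diagonal_apply_ne _ h]
  set S : Finset K := Finset.univ.image θ with hS
  set q : K[X] := ∏ c ∈ S, (X - C c) with hq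
  have haevq : Polynomial.aeval M q = 0 := by
    rw [hMdiag]
    have : Matrix.diagonal θ = Matrix.diagonalAlgHom (α := K) K θ := rfl
    rw [this, Polynomial.aeval_algHom_apply]
    have : Polynomial.aeval θ q = 0 := by
      funext i
      have : (Polynomial.aeval θ q) i = Polynomial.aeval (θ i) q :=
        (Polynomial.aeval_algHom_apply (Pi.evalAlgHom K (fun _ => K) i) θ q).symm
      rw [this, Pi.zero_apply]
      rw [hq, map_prod]
      apply Finset.prod_eq_zero (Finset.mem_image_of_mem θ (Finset.mem_univ i))
      simp
    rw [this, map_zero]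
  have hdvd : minpoly K M ∣ q := minpoly.dvd K M haevq
  have hqmonic : q.Monic := monic_prod_of_monic _ _ fun c _ => monic_X_sub_C c
  have hqdeg : q.natDegree = S.card := by
    rw [hq, natDegree_prod _ _ fun c _ => X_sub_C_ne_zero c]
    simp [natDegree_X_sub_C]
  have hScard : S.card ≤ n := by
    calc S.card ≤ Finset.univ.card := Finset.card_image_le
    _ = n := by simp
  have hdegle : (minpoly K M).natDegree ≤ q.natDegree :=
    Polynomial.natDegree_le_of_dvd hdvd hqmonic.ne_zero
  have hcard : S.card = n := by omega
  have hinj : Function.Injective θ := by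
    have : Set.InjOn θ (Finset.univ : Finset (Fin n)) := by
      apply Finset.injOn_of_card_image_eq
      rw [← hS, hcard]; simp
    intro a b hab
    exact this (by simp) (by simp) hab
  have hprodeq : q = ∏ i, (X - C (θ i)) := by
    rw [hq, hS, Finset.prod_image (fun a _ b _ h => hinj h)]
  refine ⟨θ, hinj, ?_⟩
  rw [← hprodeq]
  apply Polynomial.eq_of_monic_of_associated (minpoly.monic (Algebra.IsIntegral.isIntegral M))
    hqmonic
  exact Polynomial.associated_of_dvd_of_natDegree_le hdvd hqmonic.ne_zero (by omega)

end Aux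

/-- Key lemma: an endomorphism that is diagonal in one basis and irreducible tridiagonal in
another has minimal polynomial a product of distinct linear factors. -/
lemma endo_key {K V : Type*} [Field K] [AddCommGroup V] [Module K V] [FiniteDimensional K V]
    {d : ℕ} (B : Module.End K V) (b1 b2 : Module.Basis (Fin (d + 1)) K V)
    (hdiag : (LinearMap.toMatrix b1 b1 B).IsDiag)
    (htri : IrredTridiag (LinearMap.toMatrix b2 b2 B)) :
    ∃ θ : Fin (d + 1) → K, Function.Injective θ ∧
      minpoly K B = ∏ i, (X - C (θ i)) := by
  have key : ∀ b : Module.Basis (Fin (d + 1)) K V,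
      minpoly K (LinearMap.toMatrix b b B) = minpoly K B := by
    intro b
    have : LinearMap.toMatrixAlgEquiv b B = LinearMap.toMatrix b b B := rfl
    rw [← this]
    exact minpoly.algEquiv_eq (LinearMap.toMatrixAlgEquiv b) B
  have hdeg : d + 1 ≤ (minpoly K B).natDegree := by
    rw [← key b2]
    exact le_natDegree_minpoly_of_irredTridiag htri
  obtain ⟨θ, hinj, heq⟩ := minpoly_of_isDiag hdiag (by rw [key b1]; exact hdeg)
  exact ⟨θ, hinj, by rw [← key b1, heq]⟩

/-- If `(A, A*)` is a Leonard pair on `V` with `dim V = d + 1`, then `A` has `d + 1` distinct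
eigenvalues, all contained in `K`: its minimal polynomial is a product of `d + 1` distinct
linear factors over `K`.  The same holds for `A*`. -/
theorem stmt_0 {K V : Type*} [Field K] [AddCommGroup V] [Module K V] [FiniteDimensional K V]
    {d : ℕ} (hdim : Module.finrank K V = d + 1) (A Astar : Module.End K V)
    (h1 : ∃ b : Module.Basis (Fin (d + 1)) K V,
      (LinearMap.toMatrix b b A).IsDiag ∧ IrredTridiag (LinearMap.toMatrix b b Astar))
    (h2 : ∃ b : Module.Basis (Fin (d + 1)) K V,
      (LinearMap.toMatrix b b Astar).IsDiag ∧ IrredTridiag (LinearMap.toMatrix b b A)) :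
    (∃ θ : Fin (d + 1) → K, Function.Injective θ ∧
      minpoly K A = ∏ i, (X - C (θ i))) ∧
    (∃ θs : Fin (d + 1) → K, Function.Injective θs ∧
      minpoly K Astar = ∏ i, (X - C (θs i))) := by
  obtain ⟨b1, hA1, hAs1⟩ := h1
  obtain ⟨b2, hAs2, hA2⟩ := h2
  exact ⟨endo_key A b1 b2 hA1 hA2, endo_key Astar b2 b1 hAs2 hAs1⟩
end

section
/- Let (A; θ_0,…,θ_d; A*; θ*_0,…,θ*_d) be a Leonard system on V, with primitive idempotents E_i of A and E*_i of A*. Then the (d+1)² linear maps A^r E*_0 A^s (0 ≤ r,s ≤ d) form a basis of the K-vector space End(V) of all K-linear maps V → V. -/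
set_option linter.unusedSectionVars false

open Polynomial Finset

/-- The primitive idempotent of `A` associated with the eigenvalue `θ i`:
`E_i = ∏_{j ≠ i} (A - θ_j I) / (θ_i - θ_j)`. -/
noncomputable def primIdem {K V : Type*} [Field K] [AddCommGroup V] [Module K V]
    {d : ℕ} (A : Module.End K V) (θ : Fin (d + 1) → K) (i : Fin (d + 1)) :
    Module.End K V :=
  aeval A (∏ j ∈ Finset.univ.erase i, (C ((θ i - θ j)⁻¹) * (X - C (θ j))))

/-- A Leonard system `(A; θ_0,…,θ_d; A*; θ*_0,…,θ*_d)` on `V`. -/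
def IsLeonardSystem {K V : Type*} [Field K] [AddCommGroup V] [Module K V]
    {d : ℕ} (A Astar : Module.End K V) (θ θs : Fin (d + 1) → K) : Prop :=
  Function.Injective θ ∧ Function.Injective θs ∧
  minpoly K A = ∏ i, (X - C (θ i)) ∧
  minpoly K Astar = ∏ i, (X - C (θs i)) ∧
  (∀ i j : Fin (d + 1),
    ((1 : ℤ) < |((i : ℕ) : ℤ) - ((j : ℕ) : ℤ)| →
      primIdem A θ i * Astar * primIdem A θ j = 0) ∧
    (|((i : ℕ) : ℤ) - ((j : ℕ) : ℤ)| = 1 →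
      primIdem A θ i * Astar * primIdem A θ j ≠ 0)) ∧
  (∀ i j : Fin (d + 1),
    ((1 : ℤ) < |((i : ℕ) : ℤ) - ((j : ℕ) : ℤ)| →
      primIdem Astar θs i * A * primIdem Astar θs j = 0) ∧
    (|((i : ℕ) : ℤ) - ((j : ℕ) : ℤ)| = 1 →
      primIdem Astar θs i * A * primIdem Astar θs j ≠ 0))

/-! ### Auxiliary lemmas -/

theorem LS.habs_gt {a b : ℕ} (h : a + 2 ≤ b ∨ b + 2 ≤ a) :
    (1 : ℤ) < |(a : ℤ) - (b : ℤ)| := by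
  rcases h with h | h
  · rw [abs_of_nonpos (by omega : (a : ℤ) - (b : ℤ) ≤ 0)]; omega
  · rw [abs_of_nonneg (by omega : (0:ℤ) ≤ (a : ℤ) - (b : ℤ))]; omega

theorem LS.habs_eq {a b : ℕ} (h : a = b + 1 ∨ b = a + 1) :
    |(a : ℤ) - (b : ℤ)| = 1 := by
  rcases h with h | h
  · rw [abs_of_nonneg (by omega : (0:ℤ) ≤ (a : ℤ) - (b : ℤ))]; omega
  · rw [abs_of_nonpos (by omega : (a : ℤ) - (b : ℤ) ≤ 0)]; omega

/-- Downward induction on `Fin n`. -/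
theorem LS.revind {n : ℕ} (P : Fin n → Prop) (h : ∀ i : Fin n, (∀ j, i < j → P j) → P i) :
    ∀ i, P i := by
  have H : ∀ k : ℕ, ∀ i : Fin n, n - (i : ℕ) ≤ k + 1 → P i := by
    intro k
    induction k with
    | zero =>
      intro i hi
      refine h i fun j hj => ?_
      have h1 := j.isLt
      have h2 : (i : ℕ) < (j : ℕ) := hj
      omega
    | succ k ih =>
      intro i hi
      refine h i fun j hj => ?_
      have h2 : (i : ℕ) < (j : ℕ) := hj
      exact ih j (by omega)
  exact fun i => H n i (by omega)

section Aux

variable {K V : Type*} [Field K] [AddCommGroup V] [Module K V]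

theorem LS.exists_apply_ne_zero {B : Module.End K V} (hB : B ≠ 0) : ∃ y, B y ≠ 0 := by
  by_contra h
  push_neg at h
  exact hB (LinearMap.ext h)

variable [FiniteDimensional K V]

open Module

theorem LS.comp_ne_zero (P B C : Module.End K V) (hBP : B * P = B) (hPC : P * C = C)
    (hrank : finrank K (LinearMap.range P) = 1) (hB : B ≠ 0) (hC : C ≠ 0) :
    B * C ≠ 0 := by
  obtain ⟨x, hx⟩ := LS.exists_apply_ne_zero hC
  obtain ⟨y, hy⟩ := LS.exists_apply_ne_zero hB
  have hPy : P y ≠ 0 := by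
    intro h
    apply hy
    calc B y = (B * P) y := by rw [hBP]
      _ = B (P y) := rfl
      _ = 0 := by rw [h, map_zero]
  have hspan : Submodule.span K {P y} = LinearMap.range P := by
    refine Submodule.eq_of_le_of_finrank_le ?_ ?_
    · rw [Submodule.span_singleton_le_iff_mem]
      exact ⟨y, rfl⟩
    · rw [hrank, finrank_span_singleton hPy]
  have hCx : C x ∈ Submodule.span K {P y} := by
    rw [hspan]
    exact ⟨C x, by rw [← Module.End.mul_apply, hPC]⟩
  obtain ⟨c, hc⟩ := Submodule.mem_span_singleton.mp hCx
  have hc0 : c ≠ 0 := by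
    intro h
    rw [h, zero_smul] at hc
    exact hx hc.symm
  intro h
  have h0 : (B * C) x = 0 := by rw [h]; rfl
  rw [Module.End.mul_apply, ← hc, map_smul] at h0
  have hBPy : B (P y) = B y := by rw [← Module.End.mul_apply, hBP]
  rw [hBPy] at h0
  rcases smul_eq_zero.mp h0 with h' | h'
  · exact hc0 h'
  · exact hy h'

theorem LS.rank_one_of_system {d : ℕ} (E : Fin (d + 1) → Module.End K V)
    (hdim : finrank K V = d + 1)
    (hidem : ∀ i, E i * E i = E i) (horth : ∀ i j, i ≠ j → E i * E j = 0)
    (hne : ∀ i, E i ≠ 0) (i : Fin (d + 1)) :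
    finrank K (LinearMap.range (E i)) = 1 := by
  have hx : ∀ j, ∃ v, E j v = v ∧ v ≠ 0 := by
    intro j
    obtain ⟨y, hy⟩ := LS.exists_apply_ne_zero (hne j)
    refine ⟨E j y, ?_, hy⟩
    rw [← Module.End.mul_apply, hidem]
  choose x hx1 hx2 using hx
  have hEx : ∀ j l, j ≠ l → E j (x l) = 0 := by
    intro j l hjl
    rw [← hx1 l, ← Module.End.mul_apply, horth j l hjl]
    rfl
  have hli : LinearIndependent K (fun j : {j : Fin (d + 1) // j ≠ i} => x j.1) := by
    rw [Fintype.linearIndependent_iff]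
    intro g hg j
    have := congrArg (E j.1) hg
    rw [map_sum, map_zero] at this
    rw [Finset.sum_eq_single j] at this
    · rw [map_smul, hx1] at this
      exact (smul_eq_zero.mp this).resolve_right (hx2 j.1)
    · intro b _ hbj
      rw [map_smul, hEx j.1 b.1 (fun h => hbj (Subtype.ext h.symm)), smul_zero]
    · exact fun h => absurd (Finset.mem_univ j) h
  have hcard : Fintype.card {j : Fin (d + 1) // j ≠ i} = d := by
    simp [Fintype.card_subtype_compl]
  have hker : (d : ℕ) ≤ finrank K (LinearMap.ker (E i)) := by
    have hWle : Submodule.span K (Set.range fun j : {j : Fin (d + 1) // j ≠ i} => x j.1)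
        ≤ LinearMap.ker (E i) := by
      rw [Submodule.span_le]
      rintro _ ⟨j, rfl⟩
      exact hEx i j.1 (Ne.symm j.2)
    have := Submodule.finrank_mono hWle
    rwa [finrank_span_eq_card hli, hcard] at this
  have hrn := LinearMap.finrank_range_add_finrank_ker (E i)
  rw [hdim] at hrn
  have hpos : LinearMap.range (E i) ≠ ⊥ := by
    intro h
    apply hne i
    apply LinearMap.ext
    intro v
    have : E i v ∈ LinearMap.range (E i) := ⟨v, rfl⟩
    rw [h] at this
    simpa using this
  have : finrank K (LinearMap.range (E i)) ≠ 0 := by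
    intro h0
    exact hpos (Submodule.finrank_eq_zero.mp h0)
  omega

end Aux

/-! ### Properties of the primitive idempotents -/

section Prim
variable {K V : Type*} [Field K] [AddCommGroup V] [Module K V] {d : ℕ}
variable {Astar : Module.End K V} {θs : Fin (d + 1) → K}

theorem LS.primIdem_eq (Astar : Module.End K V) (θs : Fin (d+1) → K) (i : Fin (d+1)) :
    primIdem Astar θs i = aeval Astar (Lagrange.basis Finset.univ θs i) := rfl

theorem LS.lag_dvd1 (θs : Fin (d+1) → K) (i : Fin (d+1)) :
    (∏ k ∈ Finset.univ.erase i, (X - C (θs k))) ∣ Lagrange.basis Finset.univ θs i := by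
  unfold Lagrange.basis
  refine Finset.prod_dvd_prod_of_dvd _ _ fun k _ => ?_
  rw [Lagrange.basisDivisor]
  exact dvd_mul_left _ _

theorem LS.lag_dvd2 (θs : Fin (d+1) → K) {i j : Fin (d+1)} (hij : i ≠ j) :
    (X - C (θs i)) ∣ Lagrange.basis Finset.univ θs j := by
  unfold Lagrange.basis
  refine dvd_trans ?_ (Finset.dvd_prod_of_mem _ (Finset.mem_erase.mpr ⟨hij, Finset.mem_univ i⟩))
  rw [Lagrange.basisDivisor]
  exact dvd_mul_left _ _

theorem LS.minpoly_split (θs : Fin (d+1) → K) (i : Fin (d+1)) :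
    (∏ k, (X - C (θs k))) = (X - C (θs i)) * ∏ k ∈ Finset.univ.erase i, (X - C (θs k)) :=
  (Finset.mul_prod_erase _ _ (Finset.mem_univ i)).symm

theorem LS.aeval_eq_zero_of_minpoly_dvd {p : K[X]}
    (h : minpoly K Astar ∣ p) : aeval Astar p = 0 := by
  obtain ⟨q, rfl⟩ := h
  rw [map_mul, minpoly.aeval, zero_mul]

variable (hinj : Function.Injective θs)
    (hmin : minpoly K Astar = ∏ i, (X - C (θs i)))

include hinj in
theorem LS.primIdem_sum : ∑ i, primIdem Astar θs i = 1 := by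
  have h := Lagrange.sum_basis (Set.injOn_of_injective hinj)
    (Finset.univ_nonempty (α := Fin (d+1)))
  calc ∑ i, primIdem Astar θs i = aeval Astar (∑ i, Lagrange.basis Finset.univ θs i) := by
        rw [map_sum]; rfl
    _ = 1 := by rw [h, map_one]

include hmin in
theorem LS.primIdem_orth {i j : Fin (d+1)} (hij : i ≠ j) :
    primIdem Astar θs i * primIdem Astar θs j = 0 := by
  rw [LS.primIdem_eq, LS.primIdem_eq, ← map_mul]
  refine LS.aeval_eq_zero_of_minpoly_dvd ?_
  rw [hmin, LS.minpoly_split θs j]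
  exact mul_dvd_mul (LS.lag_dvd2 θs (Ne.symm hij)) (LS.lag_dvd1 θs j)

include hinj hmin in
theorem LS.primIdem_idem (i : Fin (d+1)) :
    primIdem Astar θs i * primIdem Astar θs i = primIdem Astar θs i := by
  have h : aeval Astar ((Lagrange.basis Finset.univ θs i - 1) * Lagrange.basis Finset.univ θs i)
      = 0 := by
    refine LS.aeval_eq_zero_of_minpoly_dvd ?_
    rw [hmin, LS.minpoly_split θs i]
    refine mul_dvd_mul ?_ (LS.lag_dvd1 θs i)
    rw [dvd_iff_isRoot]
    simp [Polynomial.IsRoot, Lagrange.eval_basis_self (Set.injOn_of_injective hinj)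
      (Finset.mem_univ i)]
  rw [map_mul, map_sub, map_one, sub_mul, one_mul, sub_eq_zero] at h
  exact h

include hinj hmin in
theorem LS.primIdem_ne_zero (i : Fin (d+1)) : primIdem Astar θs i ≠ 0 := by
  intro h
  have hdvd : minpoly K Astar ∣ Lagrange.basis Finset.univ θs i :=
    minpoly.dvd K Astar (by rw [← LS.primIdem_eq, h])
  have hne : Lagrange.basis Finset.univ θs i ≠ 0 :=
    Lagrange.basis_ne_zero (Set.injOn_of_injective hinj) (Finset.mem_univ i)
  have hdeg := Polynomial.degree_le_of_dvd hdvd hne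
  rw [Lagrange.degree_basis (Set.injOn_of_injective hinj) (Finset.mem_univ i)] at hdeg
  have hdm : (minpoly K Astar).degree = ((d + 1 : ℕ) : WithBot ℕ) := by
    rw [hmin]
    rw [Polynomial.degree_prod]
    simp [Polynomial.degree_X_sub_C]
  rw [hdm] at hdeg
  simp only [Finset.card_univ, Fintype.card_fin] at hdeg
  have : (d + 1 : ℕ) ≤ (d + 1 - 1 : ℕ) := by exact_mod_cast hdeg
  omega

end Prim

/-! ### Triangularity -/

section Tri
open Module
variable {K V : Type*} [Field K] [AddCommGroup V] [Module K V] [FiniteDimensional K V] {d : ℕ}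
variable (E : Fin (d + 1) → Module.End K V) (A : Module.End K V)
variable (hsum : ∑ j, E j = 1) (hidem : ∀ j, E j * E j = E j)
variable (horth : ∀ i j, i ≠ j → E i * E j = 0)
variable (htri : ∀ i j : Fin (d + 1), (1 : ℤ) < |((i : ℕ) : ℤ) - ((j : ℕ) : ℤ)| →
    E i * A * E j = 0)
variable (hne : ∀ i j : Fin (d + 1), |((i : ℕ) : ℤ) - ((j : ℕ) : ℤ)| = 1 →
    E i * A * E j ≠ 0)
variable (hrank : ∀ i, finrank K (LinearMap.range (E i)) = 1)
include hsum hidem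

theorem LS.key_decomp (B C : Module.End K V) :
    B * C = ∑ j, (B * E j) * (E j * C) := by
  calc B * C = B * (∑ j, E j) * C := by rw [hsum, mul_one]
    _ = ∑ j, B * E j * C := by rw [Finset.mul_sum, Finset.sum_mul]
    _ = ∑ j, (B * E j) * (E j * C) := by
        refine Finset.sum_congr rfl fun j _ => ?_
        conv_lhs => rw [← hidem j]
        rw [← mul_assoc, mul_assoc (B * E j)]

include horth htri

theorem LS.opC1 : ∀ (k : ℕ) (i : Fin (d + 1)), k < (i : ℕ) → E 0 * A ^ k * E i = 0 := by
  intro k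
  induction k with
  | zero =>
    intro i hi
    rw [pow_zero, mul_one]
    exact horth 0 i (by intro h; rw [← h] at hi; simp at hi)
  | succ k ih =>
    intro i hi
    have h1 : E 0 * A ^ (k + 1) * E i = (E 0 * A ^ k) * (A * E i) := by
      rw [pow_succ]; simp only [mul_assoc]
    rw [h1, LS.key_decomp E hsum hidem]
    refine Finset.sum_eq_zero fun j _ => ?_
    rcases lt_or_ge k (j : ℕ) with hj | hj
    · rw [ih j hj, zero_mul]
    · have h2 : E j * A * E i = 0 := htri j i (LS.habs_gt (Or.inl (by omega)))
      rw [← mul_assoc (E j), h2, mul_zero]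

theorem LS.opC1' : ∀ (k : ℕ) (i : Fin (d + 1)), k < (i : ℕ) → E i * A ^ k * E 0 = 0 := by
  intro k
  induction k with
  | zero =>
    intro i hi
    rw [pow_zero, mul_one]
    exact horth i 0 (by intro h; rw [h] at hi; simp at hi)
  | succ k ih =>
    intro i hi
    have h1 : E i * A ^ (k + 1) * E 0 = (E i * A) * (A ^ k * E 0) := by
      rw [pow_succ']; simp only [mul_assoc]
    rw [h1, LS.key_decomp E hsum hidem]
    refine Finset.sum_eq_zero fun j _ => ?_
    rcases lt_or_ge k (j : ℕ) with hj | hj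
    · rw [← mul_assoc (E j) (A ^ k) (E 0), ih j hj, mul_zero]
    · have h2 : E i * A * E j = 0 := htri i j (LS.habs_gt (Or.inr (by omega)))
      rw [h2, zero_mul]

include hne hrank

theorem LS.opC2 : ∀ (k : ℕ) (hk : k < d + 1), E 0 * A ^ k * E ⟨k, hk⟩ ≠ 0 := by
  intro k
  induction k with
  | zero =>
    intro hk
    have h0 : (⟨0, hk⟩ : Fin (d + 1)) = 0 := rfl
    rw [h0, pow_zero, mul_one, hidem 0]
    intro h
    have := hrank 0
    rw [h, LinearMap.range_zero, finrank_bot] at this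
    exact absurd this (by omega)
  | succ k ih =>
    intro hk
    have hk' : k < d + 1 := by omega
    set k' : Fin (d + 1) := ⟨k, hk'⟩ with hk'def
    set i : Fin (d + 1) := ⟨k + 1, hk⟩ with hidef
    have hival : (i : ℕ) = k + 1 := rfl
    have hkval : (k' : ℕ) = k := rfl
    have hsplit : E 0 * A ^ (k + 1) * E i = (E 0 * A ^ k * E k') * (E k' * A * E i) := by
      have h1 : E 0 * A ^ (k + 1) * E i = (E 0 * A ^ k) * (A * E i) := by
        rw [pow_succ]; simp only [mul_assoc]
      rw [h1, LS.key_decomp E hsum hidem]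
      rw [Finset.sum_eq_single_of_mem k' (Finset.mem_univ k')]
      · rw [← mul_assoc (E k') A (E i)]
      · intro j _ hj
        have hjk : (j : ℕ) ≠ k := fun h => hj (Fin.ext h)
        rcases lt_or_gt_of_ne hjk with h' | h'
        · have h2 : E j * A * E i = 0 := htri j i (LS.habs_gt (Or.inl (by omega)))
          rw [← mul_assoc (E j) A (E i), h2, mul_zero]
        · rw [LS.opC1 E A hsum hidem horth htri k j h', zero_mul]
    rw [hsplit]
    refine LS.comp_ne_zero (E k') _ _ ?_ ?_ (hrank k') ?_ ?_
    · rw [mul_assoc, hidem]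
    · conv_lhs => rw [← mul_assoc, ← mul_assoc]
      rw [hidem]
    · exact ih hk'
    · exact hne k' i (LS.habs_eq (Or.inr (by omega)))

theorem LS.opC2' : ∀ (k : ℕ) (hk : k < d + 1), E ⟨k, hk⟩ * A ^ k * E 0 ≠ 0 := by
  intro k
  induction k with
  | zero =>
    intro hk
    have h0 : (⟨0, hk⟩ : Fin (d + 1)) = 0 := rfl
    rw [h0, pow_zero, mul_one, hidem 0]
    intro h
    have := hrank 0
    rw [h, LinearMap.range_zero, finrank_bot] at this
    exact absurd this (by omega)
  | succ k ih =>
    intro hk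
    have hk' : k < d + 1 := by omega
    set k' : Fin (d + 1) := ⟨k, hk'⟩ with hk'def
    set i : Fin (d + 1) := ⟨k + 1, hk⟩ with hidef
    have hival : (i : ℕ) = k + 1 := rfl
    have hkval : (k' : ℕ) = k := rfl
    have hsplit : E i * A ^ (k + 1) * E 0 = (E i * A * E k') * (E k' * A ^ k * E 0) := by
      have h1 : E i * A ^ (k + 1) * E 0 = (E i * A) * (A ^ k * E 0) := by
        rw [pow_succ']; simp only [mul_assoc]
      rw [h1, LS.key_decomp E hsum hidem]
      rw [Finset.sum_eq_single_of_mem k' (Finset.mem_univ k')]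
      · rw [← mul_assoc (E k') (A ^ k) (E 0)]
      · intro j _ hj
        have hjk : (j : ℕ) ≠ k := fun h => hj (Fin.ext h)
        rcases lt_or_gt_of_ne hjk with h' | h'
        · have h2 : E i * A * E j = 0 := htri i j (LS.habs_gt (Or.inr (by omega)))
          rw [h2, zero_mul]
        · rw [← mul_assoc (E j) (A ^ k) (E 0),
            LS.opC1' E A hsum hidem horth htri k j h', mul_zero]
    rw [hsplit]
    refine LS.comp_ne_zero (E k') _ _ ?_ ?_ (hrank k') ?_ ?_
    · rw [mul_assoc, hidem]
    · conv_lhs => rw [← mul_assoc, ← mul_assoc]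
      rw [hidem]
    · exact hne i k' (LS.habs_eq (Or.inl (by omega)))
    · exact ih hk'

end Tri
/-- The `(d+1)²` linear maps `A^r E*_0 A^s` (`0 ≤ r,s ≤ d`) form a basis of `End(V)`. -/
theorem stmt_1 {K V : Type*} [Field K] [AddCommGroup V] [Module K V] [FiniteDimensional K V]
    {d : ℕ} (hdim : Module.finrank K V = d + 1)
    (A Astar : Module.End K V) (θ θs : Fin (d + 1) → K)
    (hLS : IsLeonardSystem A Astar θ θs) :
    LinearIndependent K
      (fun p : Fin (d + 1) × Fin (d + 1) =>
        A ^ (p.1 : ℕ) * primIdem Astar θs 0 * A ^ (p.2 : ℕ)) ∧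
    Submodule.span K
      (Set.range (fun p : Fin (d + 1) × Fin (d + 1) =>
        A ^ (p.1 : ℕ) * primIdem Astar θs 0 * A ^ (p.2 : ℕ))) = ⊤ := by
  obtain ⟨-, hinj, -, hmin, -, htri6⟩ := hLS
  set E : Fin (d + 1) → Module.End K V := primIdem Astar θs with hE
  have hsum : ∑ j, E j = 1 := LS.primIdem_sum hinj
  have hidem : ∀ j, E j * E j = E j := fun j => LS.primIdem_idem hinj hmin j
  have horth : ∀ i j, i ≠ j → E i * E j = 0 := fun i j h => LS.primIdem_orth hmin h
  have hEne : ∀ i, E i ≠ 0 := fun i => LS.primIdem_ne_zero hinj hmin i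
  have hrank : ∀ i, Module.finrank K (LinearMap.range (E i)) = 1 :=
    LS.rank_one_of_system E hdim hidem horth hEne
  have htri : ∀ i j : Fin (d + 1), (1 : ℤ) < |((i : ℕ) : ℤ) - ((j : ℕ) : ℤ)| →
      E i * A * E j = 0 := fun i j => (htri6 i j).1
  have hne1 : ∀ i j : Fin (d + 1), |((i : ℕ) : ℤ) - ((j : ℕ) : ℤ)| = 1 →
      E i * A * E j ≠ 0 := fun i j => (htri6 i j).2
  have hC1 := LS.opC1 E A hsum hidem horth htri
  have hC1' := LS.opC1' E A hsum hidem horth htri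
  have hC2 := LS.opC2 E A hsum hidem horth htri hne1 hrank
  have hC2' := LS.opC2' E A hsum hidem horth htri hne1 hrank
  -- a spanning vector of the range of `E 0`
  obtain ⟨y0, hy0⟩ := LS.exists_apply_ne_zero (hEne 0)
  set v0 : V := E 0 y0 with hv0def
  have hv0ne : v0 ≠ 0 := hy0
  have hE0v0 : E 0 v0 = v0 := by rw [hv0def, ← Module.End.mul_apply, hidem]
  have hrangespan : Submodule.span K {v0} = LinearMap.range (E 0) := by
    refine Submodule.eq_of_le_of_finrank_le ?_ ?_
    · rw [Submodule.span_singleton_le_iff_mem]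
      exact ⟨y0, rfl⟩
    · rw [hrank 0, finrank_span_singleton hv0ne]
  have hfex : ∀ x : V, ∃ a : K, E 0 x = a • v0 := by
    intro x
    have hmem : E 0 x ∈ Submodule.span K {v0} := by
      rw [hrangespan]; exact ⟨x, rfl⟩
    obtain ⟨a, ha⟩ := Submodule.mem_span_singleton.mp hmem
    exact ⟨a, ha.symm⟩
  choose fval hfval using hfex
  have hfzero : ∀ x, fval x = 0 ↔ E 0 x = 0 := by
    intro x
    constructor
    · intro h; rw [hfval, h, zero_smul]
    · intro h; rw [hfval] at h; exact (smul_eq_zero.mp h).resolve_right hv0ne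
  -- vector forms of the triangularity statements
  have hvC1 : ∀ (i : Fin (d + 1)) (r : ℕ), r < (i : ℕ) → E i ((A ^ r) v0) = 0 := by
    intro i r hr
    have h : E i ((A ^ r) v0) = (E i * A ^ r * E 0) v0 := by
      rw [Module.End.mul_apply, Module.End.mul_apply, hE0v0]
    rw [h, hC1' r i hr]
    rfl
  have hvC2 : ∀ i : Fin (d + 1), E i ((A ^ (i : ℕ)) v0) ≠ 0 := by
    intro i
    have h := hC2' (i : ℕ) i.isLt
    rw [Fin.eta] at h
    obtain ⟨y, hy⟩ := LS.exists_apply_ne_zero h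
    intro h0
    apply hy
    rw [Module.End.mul_apply, Module.End.mul_apply, hfval y, map_smul, map_smul, h0, smul_zero]
  -- linear independence of the `A^r v0`
  have hv : ∀ c : Fin (d + 1) → K, (∑ r, c r • (A ^ (r : ℕ)) v0) = 0 → ∀ r, c r = 0 := by
    intro c hc
    refine LS.revind _ fun i hgt => ?_
    have h1 := congrArg (E i) hc
    rw [map_sum, map_zero] at h1
    rw [Finset.sum_eq_single i] at h1
    · rw [map_smul] at h1
      exact (smul_eq_zero.mp h1).resolve_right (hvC2 i)
    · intro b _ hb
      rcases lt_or_gt_of_ne hb with h' | h'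
      · rw [map_smul, hvC1 i (b : ℕ) h', smul_zero]
      · rw [hgt b h', zero_smul, map_zero]
    · exact fun h => absurd (Finset.mem_univ i) h
  -- linear independence of the functionals `fval ∘ A^s`
  have hf : ∀ c : Fin (d + 1) → K,
      (∀ x, ∑ s, c s * fval ((A ^ (s : ℕ)) x) = 0) → ∀ s, c s = 0 := by
    intro c hc
    refine LS.revind _ fun i hgt => ?_
    have h := hC2 (i : ℕ) i.isLt
    rw [Fin.eta] at h
    obtain ⟨y, hy⟩ := LS.exists_apply_ne_zero h
    have h1 := hc (E i y)
    rw [Finset.sum_eq_single i] at h1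
    · rcases mul_eq_zero.mp h1 with h' | h'
      · exact h'
      · exfalso
        apply hy
        rw [Module.End.mul_apply, Module.End.mul_apply, hfval, h', zero_smul]
    · intro b _ hb
      rcases lt_or_gt_of_ne hb with h' | h'
      · have hz : E 0 ((A ^ (b : ℕ)) (E i y)) = 0 := by
          have hop := hC1 (b : ℕ) i h'
          calc E 0 ((A ^ (b : ℕ)) (E i y)) = (E 0 * A ^ (b : ℕ) * E i) y := rfl
            _ = 0 := by rw [hop]; rfl
        rw [(hfzero _).mpr hz, mul_zero]
      · rw [hgt b h', zero_mul]
    · exact fun h => absurd (Finset.mem_univ i) h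
  -- linear independence of the full family
  have hLI : LinearIndependent K
      (fun p : Fin (d + 1) × Fin (d + 1) => A ^ (p.1 : ℕ) * E 0 * A ^ (p.2 : ℕ)) := by
    rw [Fintype.linearIndependent_iff]
    intro g hg
    have hpt : ∀ (x : V) (r : Fin (d + 1)),
        ∑ s : Fin (d + 1), g (r, s) * fval ((A ^ (s : ℕ)) x) = 0 := by
      intro x r
      have hx := LinearMap.congr_fun hg x
      rw [LinearMap.sum_apply, LinearMap.zero_apply] at hx
      have hx2 : ∑ p : Fin (d + 1) × Fin (d + 1),
          (g p * fval ((A ^ (p.2 : ℕ)) x)) • (A ^ (p.1 : ℕ)) v0 = 0 := by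
        rw [← hx]
        refine Finset.sum_congr rfl fun p _ => ?_
        rw [LinearMap.smul_apply, Module.End.mul_apply, Module.End.mul_apply, hfval,
          map_smul, smul_smul]
      rw [Fintype.sum_prod_type] at hx2
      have hx3 : ∑ r' : Fin (d + 1),
          (∑ s : Fin (d + 1), g (r', s) * fval ((A ^ (s : ℕ)) x)) • (A ^ (r' : ℕ)) v0 = 0 := by
        rw [← hx2]
        refine Finset.sum_congr rfl fun r' _ => ?_
        rw [Finset.sum_smul]
      exact hv _ hx3 r
    intro p
    exact hf (fun s => g (p.1, s)) (fun x => hpt x p.1) p.2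
  refine ⟨hLI, ?_⟩
  have hcard : Fintype.card (Fin (d + 1) × Fin (d + 1)) = Module.finrank K (Module.End K V) := by
    have : Module.finrank K (Module.End K V) = (d + 1) * (d + 1) := by
      show Module.finrank K (V →ₗ[K] V) = (d + 1) * (d + 1)
      rw [Module.finrank_linearMap, hdim]
    rw [this]
    simp
  have hb := basisOfLinearIndependentOfCardEqFinrank hLI hcard
  have hbeq := coe_basisOfLinearIndependentOfCardEqFinrank hLI hcard
  rw [← hbeq]
  exact (basisOfLinearIndependentOfCardEqFinrank hLI hcard).span_eq
end

section
/- Let (A; θ_0,…,θ_d; A*; θ*_0,…,θ*_d) be a Leonard system on V, with primitive idempotents E_i of A and E*_i of A*. Then the K-subalgebra of End(V) generated by A and E*_0 equals End(V). Moreover, the K-subalgebra of End(V) generated by A and A* equals End(V). -/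
open Polynomial Finset

section Aux

variable {K V : Type*} [Field K] [AddCommGroup V] [Module K V] {d : ℕ}

lemma pow_apply_eig (B : Module.End K V) {μ : K} {w : V} (h : B w = μ • w) (n : ℕ) :
    (B ^ n) w = μ ^ n • w := by
  induction n with
  | zero => simp
  | succ n ih =>
    rw [pow_succ, Module.End.mul_apply, h, map_smul, ih, smul_smul, pow_succ]
    ring_nf

lemma aeval_apply_eig (B : Module.End K V) {μ : K} {w : V} (h : B w = μ • w) (p : K[X]) :
    (aeval B p) w = p.eval μ • w := by
  induction p using Polynomial.induction_on' with
  | add p q hp hq => simp [LinearMap.add_apply, hp, hq, add_smul]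
  | monomial n a =>
    simp [aeval_monomial, Module.End.mul_apply, pow_apply_eig B h n,
      Module.algebraMap_end_apply, smul_smul, eval_monomial, mul_comm]

lemma primIdem_poly_eval (θ : Fin (d + 1) → K) (hθ : Function.Injective θ) (i j : Fin (d + 1)) :
    (∏ k ∈ Finset.univ.erase i, (C ((θ i - θ k)⁻¹) * (X - C (θ k)))).eval (θ j)
      = if j = i then 1 else 0 := by
  rw [eval_prod]
  by_cases h : j = i
  · subst h
    rw [if_pos rfl]
    apply Finset.prod_eq_one
    intro k hk
    have hk' : k ≠ j := (Finset.mem_erase.mp hk).1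
    have : θ j - θ k ≠ 0 := sub_ne_zero.mpr fun he => hk' (hθ he).symm
    simp [inv_mul_cancel₀ this]
  · rw [if_neg h]
    apply Finset.prod_eq_zero (Finset.mem_erase.mpr ⟨h, Finset.mem_univ j⟩)
    simp

lemma primIdem_apply_eig {B : Module.End K V} {θ : Fin (d + 1) → K}
    (hθ : Function.Injective θ) {i j : Fin (d + 1)} {w : V} (h : B w = θ j • w) :
    primIdem B θ i w = (if j = i then 1 else 0) • w := by
  rw [primIdem, aeval_apply_eig B h, primIdem_poly_eval θ hθ]
  by_cases h' : j = i <;> simp [h']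

lemma krylov_span_top (S : Module.End K V) (c : Module.Basis (Fin (d + 1)) K V)
    (hlow : ∀ i j : Fin (d + 1), (j : ℕ) = (i : ℕ) + 1 → c.repr (S (c i)) j ≠ 0)
    (hhigh : ∀ i j : Fin (d + 1), (i : ℕ) + 1 < (j : ℕ) → c.repr (S (c i)) j = 0) :
    Submodule.span K (Set.range fun n : ℕ => (S ^ n) (c 0)) = ⊤ := by
  set KS := Submodule.span K (Set.range fun n : ℕ => (S ^ n) (c 0)) with hKSdef
  have hmapA : ∀ w ∈ KS, S w ∈ KS := by
    intro w hw
    induction hw using Submodule.span_induction with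
    | mem x hx =>
      obtain ⟨n, rfl⟩ := hx
      exact Submodule.subset_span
        ⟨n + 1, by show (S ^ (n+1)) (c 0) = _; rw [pow_succ', Module.End.mul_apply]⟩
    | zero => simp
    | add x y _ _ hx hy => rw [map_add]; exact KS.add_mem hx hy
    | smul a x _ hx => rw [map_smul]; exact KS.smul_mem a hx
  have hmem : ∀ n (hn : n < d + 1), c ⟨n, hn⟩ ∈ KS := by
    intro n
    induction n using Nat.strong_induction_on with
    | _ n ih =>
      intro hn
      match n, hn, ih with
      | 0, hn, ih =>
        have h0 : (⟨0, hn⟩ : Fin (d + 1)) = 0 := by ext; simp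
        rw [h0]
        exact Submodule.subset_span ⟨0, by simp⟩
      | (m + 1), hn, ih =>
        have hm : m < d + 1 := by omega
        set i : Fin (d + 1) := ⟨m, hm⟩ with hi
        set i' : Fin (d + 1) := ⟨m + 1, hn⟩ with hi'
        have hAi : S (c i) ∈ KS := hmapA _ (ih m (by omega) hm)
        have hexp : S (c i) = ∑ j, c.repr (S (c i)) j • c j := (c.sum_repr _).symm
        have hc' : c.repr (S (c i)) i' ≠ 0 := hlow i i' (by simp [hi, hi'])
        have hrest : ∑ j ∈ univ.erase i', c.repr (S (c i)) j • c j ∈ KS := by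
          apply Submodule.sum_mem
          intro j hj
          rcases lt_or_ge (j : ℕ) (m + 1) with h | h
          · refine KS.smul_mem _ ?_
            have := ih (j : ℕ) (by omega) j.2
            simpa [Fin.eta] using this
          · have hj' : j ≠ i' := (Finset.mem_erase.mp hj).1
            have hgt : (i : ℕ) + 1 < (j : ℕ) := by
              have : (j : ℕ) ≠ m + 1 := fun hh => hj' (Fin.ext hh)
              simp only [hi]
              omega
            rw [hhigh i j hgt, zero_smul]
            exact KS.zero_mem
        have hmem' : c.repr (S (c i)) i' • c i' ∈ KS := by
          have h2 : c.repr (S (c i)) i' • c i'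
              = S (c i) - ∑ j ∈ univ.erase i', c.repr (S (c i)) j • c j := by
            nth_rewrite 2 [hexp]
            rw [← Finset.add_sum_erase _ _ (Finset.mem_univ i')]
            abel
          rw [h2]
          exact KS.sub_mem hAi hrest
        have := KS.smul_mem (c.repr (S (c i)) i')⁻¹ hmem'
        rwa [smul_smul, inv_mul_cancel₀ hc', one_smul] at this
  rw [eq_top_iff, ← c.span_eq]
  apply Submodule.span_le.mpr
  rintro w ⟨j, rfl⟩
  have := hmem (j : ℕ) j.2
  simpa [Fin.eta] using this

end Aux

section Eigen

variable {K V : Type*} [Field K] [AddCommGroup V] [Module K V] [FiniteDimensional K V] {d : ℕ}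

lemma exists_eigenbasis (hdim : Module.finrank K V = d + 1) (B : Module.End K V)
    (θ : Fin (d + 1) → K) (hθ : Function.Injective θ)
    (hmin : minpoly K B = ∏ i, (X - C (θ i))) :
    ∃ b : Module.Basis (Fin (d + 1)) K V, ∀ i, B (b i) = θ i • b i := by
  have hev : ∀ i : Fin (d + 1), ∃ w, B.HasEigenvector (θ i) w := by
    intro i
    apply Module.End.HasEigenvalue.exists_hasEigenvector
    rw [Module.End.hasEigenvalue_iff_isRoot, hmin]
    show eval (θ i) (∏ k : Fin (d + 1), (X - C (θ k))) = 0
    rw [eval_prod]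
    exact Finset.prod_eq_zero (Finset.mem_univ i) (by simp)
  choose w hw using hev
  have hli := B.eigenvectors_linearIndependent' θ hθ w hw
  let b := basisOfLinearIndependentOfCardEqFinrank hli (by simp [hdim])
  refine ⟨b, fun i => ?_⟩
  have hb : ⇑b = w := coe_basisOfLinearIndependentOfCardEqFinrank hli _
  rw [hb]
  exact (hw i).apply_eq_smul

variable {B : Module.End K V} {θ : Fin (d + 1) → K} {b : Module.Basis (Fin (d + 1)) K V}

omit [FiniteDimensional K V] in
lemma primIdem_apply_repr (hθ : Function.Injective θ) (hb : ∀ i, B (b i) = θ i • b i)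
    (i : Fin (d + 1)) (w : V) :
    primIdem B θ i w = b.repr w i • b i := by
  conv_lhs => rw [← b.sum_repr w, map_sum]
  rw [Finset.sum_eq_single i]
  · rw [map_smul, primIdem_apply_eig hθ (hb i), if_pos rfl, one_smul]
  · intro j _ hj
    rw [map_smul, primIdem_apply_eig hθ (hb j), if_neg hj, zero_smul, smul_zero]
  · intro h; exact absurd (Finset.mem_univ i) h

omit [FiniteDimensional K V] in
lemma primIdem_mul_pow (hθ : Function.Injective θ) (hb : ∀ i, B (b i) = θ i • b i)
    (k : Fin (d + 1)) (n : ℕ) :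
    primIdem B θ k * B ^ n = θ k ^ n • primIdem B θ k := by
  apply b.ext
  intro j
  rw [Module.End.mul_apply, pow_apply_eig B (hb j) n, map_smul,
    primIdem_apply_repr hθ hb, LinearMap.smul_apply, primIdem_apply_repr hθ hb,
    Module.Basis.repr_self]
  by_cases h : j = k
  · subst h; simp
  · simp [Finsupp.single_apply, h]

end Eigen


/-- `A` and `E*_0` generate `End(V)` as a `K`-algebra; moreover `A` and `A*` generate `End(V)`. -/
theorem stmt_2 {K V : Type*} [Field K] [AddCommGroup V] [Module K V] [FiniteDimensional K V]
    {d : ℕ} (hdim : Module.finrank K V = d + 1)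
    (A Astar : Module.End K V) (θ θs : Fin (d + 1) → K)
    (hLS : IsLeonardSystem A Astar θ θs) :
    Algebra.adjoin K ({A, primIdem Astar θs 0} : Set (Module.End K V)) = ⊤ ∧
    Algebra.adjoin K ({A, Astar} : Set (Module.End K V)) = ⊤ := by
  obtain ⟨hθ, hθs, hminA, hminAs, hE, hEs⟩ := hLS
  obtain ⟨b, hb⟩ := exists_eigenbasis hdim A θ hθ hminA
  obtain ⟨bs, hbs⟩ := exists_eigenbasis hdim Astar θs hθs hminAs
  have hEA : ∀ (i : Fin (d+1)) (w : V), primIdem A θ i w = b.repr w i • b i :=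
    primIdem_apply_repr hθ hb
  have hES : ∀ (i : Fin (d+1)) (w : V), primIdem Astar θs i w = bs.repr w i • bs i :=
    primIdem_apply_repr hθs hbs
  -- coefficient criterion for the tridiagonal conditions
  have hcoeff : ∀ i j : Fin (d + 1),
      (primIdem Astar θs i * A * primIdem Astar θs j = 0) ↔ bs.repr (A (bs j)) i = 0 := by
    intro i j
    constructor
    · intro h0
      have h1 := DFunLike.congr_fun h0 (bs j)
      have h2 : primIdem Astar θs j (bs j) = bs j := by
        rw [hES, Module.Basis.repr_self, Finsupp.single_eq_same, one_smul]
      rw [Module.End.mul_apply, Module.End.mul_apply, h2, hES, LinearMap.zero_apply] at h1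
      rcases smul_eq_zero.mp h1 with h | h
      · exact h
      · exact absurd h (bs.ne_zero i)
    · intro hz
      ext w
      rw [Module.End.mul_apply, Module.End.mul_apply, hES j, map_smul, map_smul, hES i, hz,
        zero_smul, smul_zero, LinearMap.zero_apply]
  -- Krylov 1 : the span of A^n (bs 0) is everything
  have hlow1 : ∀ i j : Fin (d + 1), (j : ℕ) = (i : ℕ) + 1 → bs.repr (A (bs i)) j ≠ 0 := by
    intro i j hj hzero
    have habs : |((j : ℕ) : ℤ) - ((i : ℕ) : ℤ)| = 1 := by
      rw [show ((j : ℕ) : ℤ) - ((i : ℕ) : ℤ) = 1 by omega]; simp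
    exact (hEs j i).2 habs ((hcoeff j i).mpr hzero)
  have hhigh1 : ∀ i j : Fin (d + 1), (i : ℕ) + 1 < (j : ℕ) → bs.repr (A (bs i)) j = 0 := by
    intro i j hij
    have habs : (1 : ℤ) < |((j : ℕ) : ℤ) - ((i : ℕ) : ℤ)| := by
      rw [abs_of_nonneg (by omega)]; omega
    exact (hcoeff j i).mp ((hEs j i).1 habs)
  have hK1 := krylov_span_top A bs hlow1 hhigh1
  have hx : ∀ k : Fin (d + 1), b.repr (bs 0) k ≠ 0 := by
    intro k hzero
    have hEk0 : ∀ n : ℕ, primIdem A θ k ((A ^ n) (bs 0)) = 0 := by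
      intro n
      calc primIdem A θ k ((A ^ n) (bs 0)) = (primIdem A θ k * A ^ n) (bs 0) := rfl
        _ = (θ k ^ n • primIdem A θ k) (bs 0) := by rw [primIdem_mul_pow hθ hb]
        _ = θ k ^ n • (b.repr (bs 0) k • b k) := by rw [LinearMap.smul_apply, hEA]
        _ = 0 := by rw [hzero, zero_smul, smul_zero]
    have hker : Submodule.span K (Set.range fun n : ℕ => (A ^ n) (bs 0))
        ≤ LinearMap.ker (primIdem A θ k) := by
      rw [Submodule.span_le]
      rintro w ⟨n, rfl⟩
      exact LinearMap.mem_ker.mpr (hEk0 n)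
    rw [hK1, top_le_iff] at hker
    have hbk : primIdem A θ k (b k) = 0 :=
      LinearMap.mem_ker.mp (hker ▸ Submodule.mem_top)
    rw [hEA, Module.Basis.repr_self, Finsupp.single_eq_same, one_smul] at hbk
    exact b.ne_zero k hbk
  -- Krylov 2 : dual side
  set c := bs.dualBasis with hc
  have hcastar : ∀ (i j : Fin (d + 1)), c.repr (A.dualMap (c i)) j = bs.repr (A (bs j)) i := by
    intro i j
    rw [hc, Module.Basis.dualBasis_repr, LinearMap.dualMap_apply, Module.Basis.dualBasis_apply]
  have hlow2 : ∀ i j : Fin (d + 1), (j : ℕ) = (i : ℕ) + 1 → c.repr (A.dualMap (c i)) j ≠ 0 := by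
    intro i j hj hzero
    rw [hcastar] at hzero
    have habs : |((i : ℕ) : ℤ) - ((j : ℕ) : ℤ)| = 1 := by
      rw [show ((i : ℕ) : ℤ) - ((j : ℕ) : ℤ) = -1 by omega]; simp
    exact (hEs i j).2 habs ((hcoeff i j).mpr hzero)
  have hhigh2 : ∀ i j : Fin (d + 1), (i : ℕ) + 1 < (j : ℕ) → c.repr (A.dualMap (c i)) j = 0 := by
    intro i j hij
    rw [hcastar]
    have habs : (1 : ℤ) < |((i : ℕ) : ℤ) - ((j : ℕ) : ℤ)| := by
      rw [abs_sub_comm, abs_of_nonneg (by omega)]; omega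
    exact (hcoeff i j).mp ((hEs i j).1 habs)
  have hK2 := krylov_span_top A.dualMap c hlow2 hhigh2
  have hy : ∀ k : Fin (d + 1), bs.repr (b k) 0 ≠ 0 := by
    intro k hzero
    have hpow : ∀ n : ℕ, ((A.dualMap ^ n) (c 0)) (b k) = 0 := by
      intro n
      induction n with
      | zero =>
        rw [pow_zero, Module.End.one_apply, hc, Module.Basis.dualBasis_apply]
        exact hzero
      | succ n ih =>
        rw [pow_succ', Module.End.mul_apply]
        rw [show A.dualMap ((A.dualMap ^ n) (c 0)) = ((A.dualMap ^ n) (c 0)).comp A from rfl]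
        rw [LinearMap.comp_apply, hb k, map_smul, ih, smul_zero]
    have hker : Submodule.span K (Set.range fun n : ℕ => (A.dualMap ^ n) (c 0))
        ≤ LinearMap.ker (Module.Dual.eval K V (b k)) := by
      rw [Submodule.span_le]
      rintro w ⟨n, rfl⟩
      exact LinearMap.mem_ker.mpr (hpow n)
    rw [hK2, top_le_iff] at hker
    have hvk : (Module.Dual.eval K V (b k)) (b.dualBasis k) = 0 :=
      LinearMap.mem_ker.mp (hker ▸ Submodule.mem_top)
    rw [Module.Dual.eval_apply, Module.Basis.dualBasis_apply_self, if_pos rfl] at hvk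
    exact one_ne_zero hvk
  -- generation
  set Sa := Algebra.adjoin K ({A, primIdem Astar θs 0} : Set (Module.End K V)) with hSa
  have hA_mem : A ∈ Sa := Algebra.subset_adjoin (by simp)
  have hE0_mem : primIdem Astar θs 0 ∈ Sa := Algebra.subset_adjoin (by simp)
  have hEb_mem : ∀ i : Fin (d + 1), primIdem A θ i ∈ Sa := by
    intro i
    have h1 : primIdem A θ i ∈ Algebra.adjoin K ({A} : Set (Module.End K V)) := by
      rw [Algebra.adjoin_singleton_eq_range_aeval]
      exact ⟨_, rfl⟩
    exact Algebra.adjoin_mono (by simp) h1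
  have happ : ∀ i j k : Fin (d + 1),
      (primIdem A θ i * primIdem Astar θs 0 * primIdem A θ j) (b k)
        = (b.repr (b k) j * (bs.repr (b j) 0 * b.repr (bs 0) i)) • b i := by
    intro i j k
    rw [Module.End.mul_apply, Module.End.mul_apply, hEA j, map_smul, hES 0, map_smul, map_smul,
      hEA i, smul_smul, smul_smul, mul_assoc]
  have hSa_top : Sa = ⊤ := by
    rw [eq_top_iff]
    intro T _
    have hrep : T = ∑ i : Fin (d + 1), ∑ j : Fin (d + 1),
        ((b.repr (bs 0) i * bs.repr (b j) 0)⁻¹ * b.repr (T (b j)) i) •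
          (primIdem A θ i * primIdem Astar θs 0 * primIdem A θ j) := by
      apply b.ext
      intro k
      rw [LinearMap.sum_apply]
      have hinner : ∀ i : Fin (d + 1),
          (∑ j : Fin (d + 1), ((b.repr (bs 0) i * bs.repr (b j) 0)⁻¹ * b.repr (T (b j)) i) •
            (primIdem A θ i * primIdem Astar θs 0 * primIdem A θ j)) (b k)
          = b.repr (T (b k)) i • b i := by
        intro i
        rw [LinearMap.sum_apply]
        rw [Finset.sum_eq_single k]
        · rw [LinearMap.smul_apply, happ, Module.Basis.repr_self, Finsupp.single_eq_same, one_mul,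
            smul_smul]
          congr 1
          have h1 := hx i
          have h2 := hy k
          rw [mul_comm ((bs.repr (b k)) 0) ((b.repr (bs 0)) i),
            mul_comm (((b.repr (bs 0)) i * (bs.repr (b k)) 0)⁻¹) ((b.repr (T (b k))) i),
            mul_assoc, inv_mul_cancel₀ (mul_ne_zero h1 h2), mul_one]
        · intro j _ hj
          rw [LinearMap.smul_apply, happ, Module.Basis.repr_self,
            Finsupp.single_eq_of_ne hj, zero_mul, zero_smul, smul_zero]
        · intro h; exact absurd (Finset.mem_univ k) h
      rw [Finset.sum_congr rfl fun i _ => hinner i]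
      exact (b.sum_repr (T (b k))).symm
    rw [hrep]
    apply Subalgebra.sum_mem
    intro i _
    apply Subalgebra.sum_mem
    intro j _
    exact Subalgebra.smul_mem _ (mul_mem (mul_mem (hEb_mem i) hE0_mem) (hEb_mem j)) _
  refine ⟨hSa_top, ?_⟩
  have hle : Sa ≤ Algebra.adjoin K ({A, Astar} : Set (Module.End K V)) := by
    apply Algebra.adjoin_le
    intro x hx'
    rcases hx' with h | h
    · exact Algebra.subset_adjoin (by simp [h])
    · simp only [Set.mem_singleton_iff] at h
      subst h
      have h1 : primIdem Astar θs 0 ∈ Algebra.adjoin K ({Astar} : Set (Module.End K V)) := by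
        rw [Algebra.adjoin_singleton_eq_range_aeval]
        exact ⟨_, rfl⟩
      exact Algebra.adjoin_mono (by simp) h1
  rw [eq_top_iff]
  exact le_trans (le_of_eq hSa_top.symm) hle
end

section
/- Let (A; θ_0,…,θ_d; A*; θ*_0,…,θ*_d) be a Leonard system on V. If X : V → V is a K-linear map that commutes with both A and A*, then X is a scalar multiple of the identity map. -/
open Polynomial Finset

lemma aux_commute_aeval {K V : Type*} [Field K] [AddCommGroup V] [Module K V]
    (X A : Module.End K V) (h : X * A = A * X) (p : K[X]) :
    X * aeval A p = aeval A p * X := by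
  have hc : Commute X A := h
  induction p using Polynomial.induction_on' with
  | add p q hp hq => simp only [map_add, mul_add, add_mul, hp, hq]
  | monomial n a =>
      rw [aeval_monomial]
      have h1 : Commute X (algebraMap K (Module.End K V) a) := (Algebra.commutes a X).symm
      exact h1.mul_right (hc.pow_right n)

lemma primIdem_eq_aeval_basis {K V : Type*} [Field K] [AddCommGroup V] [Module K V]
    {d : ℕ} (A : Module.End K V) (θ : Fin (d + 1) → K) (i : Fin (d + 1)) :
    primIdem A θ i = aeval A (Lagrange.basis Finset.univ θ i) := by
  simp [primIdem, Lagrange.basis, Lagrange.basisDivisor]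

lemma commute_primIdem {K V : Type*} [Field K] [AddCommGroup V] [Module K V]
    {d : ℕ} (X A : Module.End K V) (h : X * A = A * X) (θ : Fin (d + 1) → K)
    (i : Fin (d + 1)) : X * primIdem A θ i = primIdem A θ i * X :=
  aux_commute_aeval X A h _

lemma sum_primIdem {K V : Type*} [Field K] [AddCommGroup V] [Module K V]
    {d : ℕ} (A : Module.End K V) (θ : Fin (d + 1) → K) (hθ : Function.Injective θ) :
    ∑ i, primIdem A θ i = 1 := by
  simp only [primIdem_eq_aeval_basis]
  rw [← map_sum, Lagrange.sum_basis hθ.injOn univ_nonempty, map_one]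

/-- Any `X` commuting with both `A` and `A*` is a scalar multiple of the identity. -/
theorem stmt_3 {K V : Type*} [Field K] [AddCommGroup V] [Module K V] [FiniteDimensional K V]
    {d : ℕ} (hdim : Module.finrank K V = d + 1)
    (A Astar : Module.End K V) (θ θs : Fin (d + 1) → K)
    (hLS : IsLeonardSystem A Astar θ θs)
    (X : Module.End K V) (hXA : X * A = A * X) (hXAs : X * Astar = Astar * X) :
    ∃ c : K, X = c • (1 : Module.End K V) := by
  obtain ⟨hθ, hθs, hmin, hmins, hE, hEs⟩ := hLS
  -- each θ i is an eigenvalue of A; pick eigenvectors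
  have hroot : ∀ i, (minpoly K A).IsRoot (θ i) := by
    intro i
    rw [hmin]
    simp only [IsRoot, eval_prod, eval_sub, eval_X, eval_C]
    exact Finset.prod_eq_zero (mem_univ i) (sub_self _)
  have hev : ∀ i : Fin (d + 1), ∃ v : V, A.HasEigenvector (θ i) v := fun i =>
    (Module.End.hasEigenvalue_of_isRoot (hroot i)).exists_hasEigenvector
  choose w hw using hev
  have hli : LinearIndependent K w := A.eigenvectors_linearIndependent' θ hθ w hw
  have hcard : Fintype.card (Fin (d + 1)) = Module.finrank K V := by simp [hdim]
  let b : Module.Basis (Fin (d + 1)) K V := basisOfLinearIndependentOfCardEqFinrank hli hcard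
  have hb : ∀ i, b i = w i := fun i => by
    simp [b, coe_basisOfLinearIndependentOfCardEqFinrank]
  -- repr of A u
  have repA : ∀ (u : V) (j : Fin (d + 1)), b.repr (A u) j = θ j * b.repr u j := by
    intro u j
    have h1 : A u = ∑ i, (θ i * b.repr u i) • b i := by
      conv_lhs => rw [← b.sum_repr u]
      rw [map_sum]
      refine Finset.sum_congr rfl fun i _ => ?_
      rw [map_smul, hb, (hw i).apply_eq_smul, smul_smul, mul_comm, ← hb]
    rw [h1, b.repr_sum_self]
  -- X (w i) is an eigenvector with eigenvalue θ i, hence a multiple of w i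
  have hXw : ∀ i, A (X (w i)) = θ i • X (w i) := by
    intro i
    have := congrArg (fun f : Module.End K V => f (w i)) hXA
    simp only [Module.End.mul_apply] at this
    rw [← this, (hw i).apply_eq_smul, map_smul]
  set c : Fin (d + 1) → K := fun i => b.repr (X (w i)) i with hc
  have hXwi : ∀ i, X (w i) = c i • w i := by
    intro i
    have hz : ∀ j, j ≠ i → b.repr (X (w i)) j = 0 := by
      intro j hj
      have h1 : b.repr (A (X (w i))) j = θ j * b.repr (X (w i)) j := repA _ j
      have h2 : b.repr (A (X (w i))) j = θ i * b.repr (X (w i)) j := by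
        rw [hXw i, map_smul]; rfl
      have h3 : (θ j - θ i) * b.repr (X (w i)) j = 0 := by
        rw [sub_mul, ← h1, ← h2, sub_self]
      rcases mul_eq_zero.1 h3 with h | h
      · exact absurd (hθ (sub_eq_zero.1 h)) hj
      · exact h
    conv_lhs => rw [← b.sum_repr (X (w i))]
    rw [Finset.sum_eq_single i (fun j _ hj => by rw [hz j hj, zero_smul]) (by simp), hb]
  -- primIdem acts as Kronecker delta on the eigenbasis
  have hEw : ∀ i j, primIdem A θ i (w j) = if i = j then w j else 0 := by
    intro i j
    rw [primIdem_eq_aeval_basis, Module.End.aeval_apply_of_hasEigenvector (hw j)]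
    by_cases hij : i = j
    · subst hij
      rw [Lagrange.eval_basis_self hθ.injOn (mem_univ i), if_pos rfl, one_smul]
    · rw [Lagrange.eval_basis_of_ne hij (mem_univ j), if_neg hij, zero_smul]
  -- X * E_i = c i • E_i
  have hXE : ∀ i, X * primIdem A θ i = c i • primIdem A θ i := by
    intro i
    ext v
    have hEv : primIdem A θ i v = b.repr v i • w i := by
      conv_lhs => rw [← b.sum_repr v]
      rw [map_sum]
      rw [Finset.sum_eq_single i
        (fun j _ hj => by rw [map_smul, hb, hEw i j, if_neg (Ne.symm hj), smul_zero])
        (by simp)]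
      rw [map_smul, hb, hEw i i, if_pos rfl]
    simp only [Module.End.mul_apply, LinearMap.smul_apply]
    rw [hEv, map_smul, hXwi i, smul_comm]
  -- neighboring c's are equal
  have hchain : ∀ i j : Fin (d + 1), |((i : ℕ) : ℤ) - ((j : ℕ) : ℤ)| = 1 → c i = c j := by
    intro i j hij
    have hF := (hE i j).2 hij
    have key : c i • (primIdem A θ i * Astar * primIdem A θ j)
        = c j • (primIdem A θ i * Astar * primIdem A θ j) := by
      calc c i • (primIdem A θ i * Astar * primIdem A θ j)
          = (c i • primIdem A θ i) * Astar * primIdem A θ j := by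
            rw [smul_mul_assoc, smul_mul_assoc]
        _ = (X * primIdem A θ i) * Astar * primIdem A θ j := by rw [hXE i]
        _ = (primIdem A θ i * X) * Astar * primIdem A θ j := by
            rw [commute_primIdem X A hXA]
        _ = primIdem A θ i * (X * Astar) * primIdem A θ j := by
            rw [mul_assoc (primIdem A θ i) X Astar]
        _ = primIdem A θ i * (Astar * X) * primIdem A θ j := by rw [hXAs]
        _ = primIdem A θ i * Astar * (X * primIdem A θ j) := by
            rw [← mul_assoc (primIdem A θ i) Astar X,
              mul_assoc (primIdem A θ i * Astar) X (primIdem A θ j)]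
        _ = primIdem A θ i * Astar * (c j • primIdem A θ j) := by rw [hXE j]
        _ = c j • (primIdem A θ i * Astar * primIdem A θ j) := by
            rw [mul_smul_comm]
    have : (c i - c j) • (primIdem A θ i * Astar * primIdem A θ j) = 0 := by
      rw [sub_smul, key, sub_self]
    rcases smul_eq_zero.1 this with h | h
    · exact sub_eq_zero.1 h
    · exact absurd h hF
  -- all c's are equal to c 0
  have hcall : ∀ i : Fin (d + 1), c i = c 0 := by
    intro i
    induction i using Fin.induction with
    | zero => rfl
    | succ i ih =>
        rw [← ih]
        refine (hchain i.succ i.castSucc ?_).trans rfl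
        simp [Fin.val_succ]
  refine ⟨c 0, ?_⟩
  calc X = X * 1 := (mul_one X).symm
    _ = X * ∑ i, primIdem A θ i := by rw [sum_primIdem A θ hθ]
    _ = ∑ i, X * primIdem A θ i := by rw [Finset.mul_sum]
    _ = ∑ i, c 0 • primIdem A θ i := by
        refine Finset.sum_congr rfl fun i _ => ?_
        rw [hXE i, hcall i]
    _ = c 0 • ∑ i, primIdem A θ i := by rw [Finset.smul_sum]
    _ = c 0 • (1 : Module.End K V) := by rw [sum_primIdem A θ hθ]
end

section
/- Let (A; θ_0,…,θ_d; A*; θ*_0,…,θ*_d) be a Leonard system on V, with primitive idempotents E_i of A and E*_i of A*. Let D denote the K-subalgebra of End(V) generated by A (so D has dimension d+1 since A is multiplicity-free), and let X_0, X_1, …, X_d be any basis of the K-vector space D. Then the (d+1)² linear maps X_r E*_0 X_s (0 ≤ r,s ≤ d) form a basis of End(V). -/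
open Polynomial Finset

section Spectral

variable {K V : Type*} [Field K] [AddCommGroup V] [Module K V] {d : ℕ}

/-- Lagrange basis polynomial. -/
noncomputable def lagPoly (θ : Fin (d + 1) → K) (i : Fin (d + 1)) : Polynomial K :=
  ∏ j ∈ Finset.univ.erase i, (C ((θ i - θ j)⁻¹) * (X - C (θ j)))

lemma primIdem_eq_aeval (A : Module.End K V) (θ : Fin (d + 1) → K) (i : Fin (d + 1)) :
    primIdem A θ i = aeval A (lagPoly θ i) := rfl

lemma eval_lagPoly_self {θ : Fin (d + 1) → K} (hθ : Function.Injective θ) (i : Fin (d + 1)) :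
    eval (θ i) (lagPoly θ i) = 1 := by
  rw [lagPoly, eval_prod]
  refine Finset.prod_eq_one fun j hj => ?_
  have hne : θ i - θ j ≠ 0 :=
    sub_ne_zero.mpr (fun h => (Finset.mem_erase.mp hj).1 (hθ h).symm)
  simp [inv_mul_cancel₀ hne]

lemma eval_lagPoly_ne {θ : Fin (d + 1) → K} {i k : Fin (d + 1)} (h : k ≠ i) :
    eval (θ k) (lagPoly θ i) = 0 := by
  rw [lagPoly, eval_prod]
  refine Finset.prod_eq_zero (Finset.mem_erase.mpr ⟨h, Finset.mem_univ k⟩) ?_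
  simp

variable {A : Module.End K V} {θ : Fin (d + 1) → K}

lemma aeval_congr_of_eval_eq (hθ : Function.Injective θ)
    (hm : minpoly K A = ∏ i, (X - C (θ i))) {p q : Polynomial K}
    (h : ∀ k, eval (θ k) p = eval (θ k) q) : aeval A p = aeval A q := by
  have hdvd : (∏ i, (X - C (θ i))) ∣ (p - q) := by
    refine Finset.prod_dvd_of_coprime ?_ fun k _ => ?_
    · intro a _ b _ hab
      exact Polynomial.pairwise_coprime_X_sub_C hθ hab
    · rw [dvd_iff_isRoot, IsRoot, eval_sub, h k, sub_self]
  obtain ⟨r, hr⟩ := hdvd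
  have h0 : aeval A (p - q) = 0 := by
    rw [hr, map_mul, ← hm, minpoly.aeval, zero_mul]
  rw [map_sub] at h0
  exact sub_eq_zero.mp h0

lemma primIdem_mul (hθ : Function.Injective θ)
    (hm : minpoly K A = ∏ i, (X - C (θ i))) (i j : Fin (d + 1)) :
    primIdem A θ i * primIdem A θ j = if i = j then primIdem A θ i else 0 := by
  by_cases hij : i = j
  · subst hij
    rw [if_pos rfl, primIdem_eq_aeval, ← map_mul (aeval A) (lagPoly θ i) (lagPoly θ i)]
    refine aeval_congr_of_eval_eq hθ hm fun k => ?_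
    by_cases hk : k = i
    · subst hk; rw [eval_mul, eval_lagPoly_self hθ, one_mul]
    · rw [eval_mul, eval_lagPoly_ne hk, zero_mul]
  · rw [if_neg hij, primIdem_eq_aeval, primIdem_eq_aeval,
      ← map_mul (aeval A) (lagPoly θ i) (lagPoly θ j)]
    have : aeval A (lagPoly θ i * lagPoly θ j) = aeval A (0 : Polynomial K) := by
      refine aeval_congr_of_eval_eq hθ hm fun k => ?_
      by_cases hk : k = i
      · subst hk
        rw [eval_mul, eval_lagPoly_ne hij, mul_zero, eval_zero]
      · rw [eval_mul, eval_lagPoly_ne hk, zero_mul, eval_zero]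
    rw [map_zero] at this
    exact this

lemma sum_primIdem_s4 (hθ : Function.Injective θ)
    (hm : minpoly K A = ∏ i, (X - C (θ i))) :
    ∑ i, primIdem A θ i = 1 := by
  simp only [primIdem_eq_aeval, ← map_sum]
  have : aeval A (∑ i, lagPoly θ i) = aeval A (1 : Polynomial K) := by
    refine aeval_congr_of_eval_eq hθ hm fun k => ?_
    rw [eval_finset_sum, eval_one]
    rw [Finset.sum_eq_single k (fun j _ hj => eval_lagPoly_ne (Ne.symm hj))
      (fun h => absurd (Finset.mem_univ k) h)]
    exact eval_lagPoly_self hθ k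
  simpa using this

lemma sum_primIdem_apply (hθ : Function.Injective θ)
    (hm : minpoly K A = ∏ i, (X - C (θ i))) (x : V) :
    ∑ i, primIdem A θ i x = x := by
  have := congrArg (fun f : Module.End K V => f x) (sum_primIdem_s4 hθ hm)
  simpa using this

lemma aeval_mul_primIdem (hθ : Function.Injective θ)
    (hm : minpoly K A = ∏ i, (X - C (θ i))) (p : Polynomial K) (i : Fin (d + 1)) :
    aeval A p * primIdem A θ i = eval (θ i) p • primIdem A θ i := by
  have : aeval A (p * lagPoly θ i) = aeval A (C (eval (θ i) p) * lagPoly θ i) := by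
    refine aeval_congr_of_eval_eq hθ hm fun k => ?_
    by_cases hk : k = i
    · subst hk; simp
    · rw [eval_mul, eval_lagPoly_ne hk, mul_zero, eval_mul, eval_lagPoly_ne hk, mul_zero]
  rw [primIdem_eq_aeval, ← map_mul, this, map_mul, aeval_C, ← Algebra.smul_def]

lemma primIdem_ne_zero (hθ : Function.Injective θ)
    (hm : minpoly K A = ∏ i, (X - C (θ i))) (i : Fin (d + 1)) :
    primIdem A θ i ≠ 0 := by
  intro h0
  have hdvd : minpoly K A ∣ lagPoly θ i := minpoly.dvd K A h0
  have hlne : lagPoly θ i ≠ 0 := by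
    intro h
    have := eval_lagPoly_self hθ i
    rw [h, eval_zero] at this
    exact one_ne_zero this.symm
  have hdeg : (minpoly K A).natDegree ≤ (lagPoly θ i).natDegree :=
    Polynomial.natDegree_le_of_dvd hdvd hlne
  have h1 : (minpoly K A).natDegree = d + 1 := by
    rw [hm, Polynomial.natDegree_prod _ _ (fun j _ => X_sub_C_ne_zero (θ j))]
    simp
  have h2 : (lagPoly θ i).natDegree ≤ d := by
    refine le_trans (Polynomial.natDegree_prod_le _ _) ?_
    calc ∑ j ∈ Finset.univ.erase i, (C ((θ i - θ j)⁻¹) * (X - C (θ j))).natDegree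
        ≤ ∑ j ∈ Finset.univ.erase i, 1 := by
          refine Finset.sum_le_sum fun j _ => ?_
          refine le_trans (natDegree_C_mul_le _ _) ?_
          simp [natDegree_X_sub_C]
      _ = d := by simp [Finset.card_erase_of_mem]
  omega

lemma aeval_eq_sum_primIdem (hθ : Function.Injective θ)
    (hm : minpoly K A = ∏ i, (X - C (θ i))) (p : Polynomial K) :
    aeval A p = ∑ i, eval (θ i) p • primIdem A θ i := by
  have h1 : aeval A p = aeval A (∑ i, C (eval (θ i) p) * lagPoly θ i) := by
    refine aeval_congr_of_eval_eq hθ hm fun k => ?_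
    rw [eval_finset_sum]
    rw [Finset.sum_eq_single k (fun j _ hj => by
      rw [eval_mul, eval_lagPoly_ne (Ne.symm hj), mul_zero])
      (fun h => absurd (Finset.mem_univ k) h)]
    rw [eval_mul, eval_C, eval_lagPoly_self hθ, mul_one]
  rw [h1, map_sum]
  refine Finset.sum_congr rfl fun i _ => ?_
  rw [map_mul, aeval_C, ← Algebra.smul_def, primIdem_eq_aeval]

lemma pow_apply_eigen {u : V} {c : K} (hu : A u = c • u) (n : ℕ) :
    (A ^ n) u = c ^ n • u := by
  induction n with
  | zero => simp
  | succ n ih =>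
    rw [pow_succ, Module.End.mul_apply, hu, map_smul, ih, smul_smul, pow_succ, mul_comm]

lemma aeval_apply_eigen {u : V} {c : K} (hu : A u = c • u) (p : Polynomial K) :
    (aeval A p) u = eval c p • u := by
  induction p using Polynomial.induction_on' with
  | add p q hp hq => rw [map_add, LinearMap.add_apply, hp, hq, eval_add, add_smul]
  | monomial n a =>
    rw [aeval_monomial, Module.End.mul_apply, Module.algebraMap_end_apply,
      pow_apply_eigen hu, eval_monomial, smul_smul]

lemma primIdem_apply_eigen (hθ : Function.Injective θ) {u : V} {b : Fin (d + 1)}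
    (hu : A u = θ b • u) (i : Fin (d + 1)) :
    primIdem A θ i u = if i = b then u else 0 := by
  rw [primIdem_eq_aeval, aeval_apply_eigen hu]
  by_cases hib : i = b
  · subst hib; rw [if_pos rfl, eval_lagPoly_self hθ, one_smul]
  · rw [if_neg hib, eval_lagPoly_ne (fun h => hib h.symm), zero_smul]

end Spectral

section Dim1

variable {K V : Type*} [Field K] [AddCommGroup V] [Module K V] [FiniteDimensional K V] {d : ℕ}
variable {A : Module.End K V} {θ : Fin (d + 1) → K}

lemma primIdem_apply_primIdem (hθ : Function.Injective θ)
    (hm : minpoly K A = ∏ i, (X - C (θ i))) (k j : Fin (d + 1)) (y : V) :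
    primIdem A θ k (primIdem A θ j y) = if k = j then primIdem A θ j y else 0 := by
  have h := congrArg (fun f : Module.End K V => f y) (primIdem_mul hθ hm k j)
  simp only [Module.End.mul_apply] at h
  by_cases hkj : k = j
  · subst hkj; simpa using h
  · simp only [if_neg hkj] at h ⊢
    simpa using h

lemma primIdem_range_dim1 (hθ : Function.Injective θ)
    (hm : minpoly K A = ∏ i, (X - C (θ i))) (hdim : Module.finrank K V = d + 1)
    {i : Fin (d + 1)} {z : V} (hz : primIdem A θ i z ≠ 0) (x : V) :
    ∃ c : K, primIdem A θ i x = c • primIdem A θ i z := by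
  by_contra hc
  push_neg at hc
  have hw : ∀ j, ∃ w, primIdem A θ j w ≠ 0 := by
    intro j
    by_contra h
    push_neg at h
    exact primIdem_ne_zero hθ hm j (LinearMap.ext fun w => h w)
  choose w hwne using hw
  set y : Fin (d + 1) → V := fun j => if j = i then z else w j with hy
  have hyne : ∀ j, primIdem A θ j (y j) ≠ 0 := by
    intro j
    by_cases hj : j = i
    · subst hj; simpa [hy] using hz
    · simpa [hy, hj] using hwne j
  set g : Option (Fin (d + 1)) → V :=
    fun o => o.elim (primIdem A θ i x) (fun j => primIdem A θ j (y j)) with hg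
  have hind : LinearIndependent K g := by
    rw [Fintype.linearIndependent_iff]
    intro c hcsum
    -- rewrite sum over Option
    rw [Fintype.sum_option] at hcsum
    have happ : ∀ k : Fin (d + 1),
        c none • primIdem A θ k (primIdem A θ i x)
          + c (some k) • primIdem A θ k (primIdem A θ k (y k)) = 0 := by
      intro k
      have := congrArg (primIdem A θ k) hcsum
      rw [map_add, map_smul, map_sum, map_zero] at this
      simp only [hg, Option.elim_none, Option.elim_some] at this
      rw [Finset.sum_eq_single k (fun j _ hj => by
          rw [map_smul, primIdem_apply_primIdem hθ hm k j, if_neg (Ne.symm hj), smul_zero])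
        (fun h => absurd (Finset.mem_univ k) h)] at this
      rw [map_smul] at this
      exact this
    -- k ≠ i kills c (some k)
    have hck : ∀ k : Fin (d + 1), k ≠ i → c (some k) = 0 := by
      intro k hk
      have := happ k
      rw [primIdem_apply_primIdem hθ hm k i, if_neg hk, smul_zero, zero_add,
        primIdem_apply_primIdem hθ hm k k, if_pos rfl] at this
      exact (smul_eq_zero.mp this).resolve_right (hyne k)
    have hi := happ i
    rw [primIdem_apply_primIdem hθ hm i i, if_pos rfl,
      primIdem_apply_primIdem hθ hm i i, if_pos rfl] at hi
    have hyi : y i = z := by simp [hy]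
    rw [hyi] at hi
    have hnone : c none = 0 := by
      by_contra hne
      apply hc (-(c (some i)) / c none)
      have : c none • primIdem A θ i x = -(c (some i)) • primIdem A θ i z := by
        rw [neg_smul]; exact eq_neg_of_add_eq_zero_left hi
      rw [div_eq_mul_inv, mul_comm, mul_smul, ← this, ← mul_smul, inv_mul_cancel₀ hne, one_smul]
    rw [hnone, zero_smul, zero_add] at hi
    have hsomei : c (some i) = 0 := (smul_eq_zero.mp hi).resolve_right hz
    intro o
    match o with
    | none => exact hnone
    | some k =>
      by_cases hk : k = i
      · subst hk; exact hsomei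
      · exact hck k hk
  have hcard := hind.fintype_card_le_finrank
  rw [hdim] at hcard
  simp at hcard
end Dim1

section KeyHelper

variable {K V : Type*} [Field K] [AddCommGroup V] [Module K V] [FiniteDimensional K V] {d : ℕ}
variable {A : Module.End K V} {θ : Fin (d + 1) → K}

lemma mul_primIdem_apply_ne_zero (hθ : Function.Injective θ)
    (hm : minpoly K A = ∏ i, (X - C (θ i))) (hdim : Module.finrank K V = d + 1)
    {B : Module.End K V} {i : Fin (d + 1)}
    (hB : B * primIdem A θ i ≠ 0) {u : V} (hu : primIdem A θ i u ≠ 0) :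
    B (primIdem A θ i u) ≠ 0 := by
  intro h0
  apply hB
  ext x
  obtain ⟨c, hc⟩ := primIdem_range_dim1 hθ hm hdim hu x
  rw [Module.End.mul_apply, hc, map_smul, h0, smul_zero, LinearMap.zero_apply]

end KeyHelper

section Core

variable {K V : Type*} [Field K] [AddCommGroup V] [Module K V] [FiniteDimensional K V] {d : ℕ}
variable {A Astar : Module.End K V} {θ θs : Fin (d + 1) → K}

lemma abs_gt_one {i j : Fin (d + 1)} (h : (j:ℕ) + 1 < (i:ℕ) ∨ (i:ℕ) + 1 < (j:ℕ)) :
    (1:ℤ) < |((i:ℕ):ℤ) - ((j:ℕ):ℤ)| := by rw [lt_abs]; omega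

lemma abs_eq_one' {i j : Fin (d + 1)} (h : (i:ℕ) = (j:ℕ) + 1 ∨ (j:ℕ) = (i:ℕ) + 1) :
    |((i:ℕ):ℤ) - ((j:ℕ):ℤ)| = 1 := by rw [abs_eq (by norm_num : (0:ℤ) ≤ 1)]; omega

lemma expand_apply (hθs : Function.Injective θs)
    (hms : minpoly K Astar = ∏ i, (X - C (θs i))) (i : Fin (d + 1)) (y : V) :
    primIdem Astar θs i (A y) = ∑ k, primIdem Astar θs i (A (primIdem Astar θs k y)) := by
  conv_lhs => rw [← sum_primIdem_apply hθs hms y]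
  rw [map_sum, map_sum]

lemma lemA1 (hθs : Function.Injective θs)
    (hms : minpoly K Astar = ∏ i, (X - C (θs i)))
    (htz : ∀ i j : Fin (d + 1), (1:ℤ) < |((i:ℕ):ℤ) - ((j:ℕ):ℤ)| →
      primIdem Astar θs i * A * primIdem Astar θs j = 0)
    {v : V} (hv0 : primIdem Astar θs 0 v = v) :
    ∀ (n : ℕ) (i : Fin (d + 1)), n < (i : ℕ) → primIdem Astar θs i ((A ^ n) v) = 0 := by
  intro n
  induction n with
  | zero =>
    intro i hi
    rw [pow_zero, Module.End.one_apply, ← hv0]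
    have h := primIdem_apply_primIdem hθs hms i 0 v
    rw [if_neg (fun h0 => by rw [h0] at hi; simp at hi)] at h
    exact h
  | succ n ih =>
    intro i hi
    rw [pow_succ', Module.End.mul_apply, expand_apply hθs hms]
    refine Finset.sum_eq_zero fun k _ => ?_
    by_cases hk : n < (k:ℕ)
    · rw [ih k hk, map_zero, map_zero]
    · have hz := htz i k (abs_gt_one (Or.inl (by omega)))
      have := congrArg (fun f : Module.End K V => f ((A ^ n) v)) hz
      simpa using this

lemma lemA2 (hθs : Function.Injective θs)
    (hms : minpoly K Astar = ∏ i, (X - C (θs i)))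
    (htz : ∀ i j : Fin (d + 1), (1:ℤ) < |((i:ℕ):ℤ) - ((j:ℕ):ℤ)| →
      primIdem Astar θs i * A * primIdem Astar θs j = 0)
    (hto : ∀ i j : Fin (d + 1), |((i:ℕ):ℤ) - ((j:ℕ):ℤ)| = 1 →
      primIdem Astar θs i * A * primIdem Astar θs j ≠ 0)
    (hdim : Module.finrank K V = d + 1)
    {v : V} (hv0 : primIdem Astar θs 0 v = v) (hv : v ≠ 0) :
    ∀ (t : ℕ) (i : Fin (d + 1)), (i : ℕ) = t → primIdem Astar θs i ((A ^ t) v) ≠ 0 := by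
  intro t
  induction t with
  | zero =>
    intro i hi
    have h0 : i = 0 := Fin.ext hi
    subst h0
    rw [pow_zero, Module.End.one_apply, hv0]
    exact hv
  | succ t ih =>
    intro i hi
    have htd : t < d + 1 := by omega
    set k : Fin (d + 1) := ⟨t, htd⟩ with hkdef
    have hik : (i:ℕ) = (k:ℕ) + 1 := by simp [hkdef, hi]
    have hexp : primIdem Astar θs i ((A ^ (t+1)) v)
        = primIdem Astar θs i (A (primIdem Astar θs k ((A ^ t) v))) := by
      rw [pow_succ', Module.End.mul_apply, expand_apply hθs hms]
      refine Finset.sum_eq_single k (fun j _ hj => ?_) (fun h => absurd (Finset.mem_univ k) h)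
      by_cases hjt : t < (j:ℕ)
      · rw [lemA1 hθs hms htz hv0 t j hjt, map_zero, map_zero]
      · have hjne : (j:ℕ) ≠ t := fun h => hj (Fin.ext (by simp [hkdef, h]))
        have hz := htz i j (abs_gt_one (Or.inl (by omega)))
        have := congrArg (fun f : Module.End K V => f ((A ^ t) v)) hz
        simpa using this
    rw [hexp]
    have hne : (primIdem Astar θs i * A) * primIdem Astar θs k ≠ 0 :=
      hto i k (abs_eq_one' (Or.inl hik))
    have hu := ih k (by simp [hkdef])
    have := mul_primIdem_apply_ne_zero hθs hms hdim hne hu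
    simpa using this

lemma lemA (hθ : Function.Injective θ) (hm : minpoly K A = ∏ i, (X - C (θ i)))
    (hθs : Function.Injective θs)
    (hms : minpoly K Astar = ∏ i, (X - C (θs i)))
    (htz : ∀ i j : Fin (d + 1), (1:ℤ) < |((i:ℕ):ℤ) - ((j:ℕ):ℤ)| →
      primIdem Astar θs i * A * primIdem Astar θs j = 0)
    (hto : ∀ i j : Fin (d + 1), |((i:ℕ):ℤ) - ((j:ℕ):ℤ)| = 1 →
      primIdem Astar θs i * A * primIdem Astar θs j ≠ 0)
    (hdim : Module.finrank K V = d + 1)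
    {v : V} (hv0 : primIdem Astar θs 0 v = v) (hv : v ≠ 0) (a : Fin (d + 1)) :
    primIdem A θ a v ≠ 0 := by
  classical
  have hind : LinearIndependent K (fun j : Fin (d + 1) => (A ^ (j:ℕ)) v) := by
    rw [Fintype.linearIndependent_iff]
    intro c hcs
    by_contra hne
    push_neg at hne
    obtain ⟨j0, hj0⟩ := hne
    have hSne : (univ.filter (fun j : Fin (d+1) => c j ≠ 0)).Nonempty :=
      ⟨j0, by simp [hj0]⟩
    set M := (univ.filter (fun j : Fin (d+1) => c j ≠ 0)).max' hSne with hM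
    have hMne : c M ≠ 0 := by
      have h := Finset.max'_mem _ hSne
      simpa using (Finset.mem_filter.mp h).2
    have happ := congrArg (primIdem Astar θs M) hcs
    rw [map_sum, map_zero] at happ
    rw [Finset.sum_eq_single M (fun j _ hj => ?_)
      (fun h => absurd (Finset.mem_univ M) h)] at happ
    · rw [map_smul] at happ
      exact hMne ((smul_eq_zero.mp happ).resolve_right
        (lemA2 hθs hms htz hto hdim hv0 hv (M:ℕ) M rfl))
    · by_cases hcj : c j = 0
      · rw [map_smul, hcj, zero_smul]
      · have hle : (j:ℕ) ≤ (M:ℕ) :=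
          Fin.le_def.mp (Finset.le_max' _ j (by simp [hcj]))
        have hjM : (j:ℕ) < (M:ℕ) := lt_of_le_of_ne hle (fun h => hj (Fin.ext h))
        rw [map_smul, lemA1 hθs hms htz hv0 (j:ℕ) M hjM, smul_zero]
  have hspan : Submodule.span K (Set.range fun j : Fin (d + 1) => (A ^ (j:ℕ)) v) = ⊤ :=
    hind.span_eq_top_of_card_eq_finrank (by simp [hdim])
  intro h0
  apply primIdem_ne_zero hθ hm a
  refine LinearMap.ext_on hspan ?_
  rintro x ⟨j, rfl⟩
  have hA : A ^ (j:ℕ) = aeval A ((X : Polynomial K) ^ (j:ℕ)) := by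
    rw [map_pow, aeval_X]
  have hcomm : primIdem A θ a * A ^ (j:ℕ) = A ^ (j:ℕ) * primIdem A θ a := by
    rw [primIdem_eq_aeval, hA, ← map_mul, ← map_mul, mul_comm]
  rw [LinearMap.zero_apply]
  calc primIdem A θ a ((A ^ (j:ℕ)) v) = (primIdem A θ a * A ^ (j:ℕ)) v := rfl
    _ = (A ^ (j:ℕ) * primIdem A θ a) v := by rw [hcomm]
    _ = (A ^ (j:ℕ)) (primIdem A θ a v) := rfl
    _ = 0 := by rw [h0, map_zero]

lemma lemB (hθs : Function.Injective θs)
    (hms : minpoly K Astar = ∏ i, (X - C (θs i)))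
    (htz : ∀ i j : Fin (d + 1), (1:ℤ) < |((i:ℕ):ℤ) - ((j:ℕ):ℤ)| →
      primIdem Astar θs i * A * primIdem Astar θs j = 0)
    (hto : ∀ i j : Fin (d + 1), |((i:ℕ):ℤ) - ((j:ℕ):ℤ)| = 1 →
      primIdem Astar θs i * A * primIdem Astar θs j ≠ 0)
    (hdim : Module.finrank K V = d + 1)
    {b : Fin (d + 1)} {u : V} (hu : u ≠ 0) (heig : A u = θ b • u) :
    primIdem Astar θs 0 u ≠ 0 := by
  classical
  intro h00
  have hTne : (univ.filter (fun i : Fin (d+1) => primIdem Astar θs i u ≠ 0)).Nonempty := by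
    by_contra h
    rw [Finset.not_nonempty_iff_eq_empty, Finset.filter_eq_empty_iff] at h
    apply hu
    rw [← sum_primIdem_apply hθs hms u]
    refine Finset.sum_eq_zero fun i _ => ?_
    have := h (Finset.mem_univ i)
    push_neg at this
    exact this
  set m := (univ.filter (fun i : Fin (d+1) => primIdem Astar θs i u ≠ 0)).min' hTne with hmdef
  have hmmem : primIdem Astar θs m u ≠ 0 := by
    have h := Finset.min'_mem _ hTne
    simpa using (Finset.mem_filter.mp h).2
  have hmpos : 0 < (m:ℕ) := by
    rcases Nat.eq_zero_or_pos (m:ℕ) with h | h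
    · have hm0 : m = 0 := Fin.ext h
      rw [hm0] at hmmem
      exact absurd h00 hmmem
    · exact h
  set k : Fin (d + 1) := ⟨(m:ℕ) - 1, by omega⟩ with hkdef
  have hkm : (m:ℕ) = (k:ℕ) + 1 := by simp [hkdef]; omega
  have hk0 : primIdem Astar θs k u = 0 := by
    by_contra hk
    have hle : (m:ℕ) ≤ (k:ℕ) := Fin.le_def.mp (Finset.min'_le _ k (by simp [hk]))
    omega
  have h1 : primIdem Astar θs k (A u) = 0 := by
    rw [heig, map_smul, hk0, smul_zero]
  have h2 : primIdem Astar θs k (A u)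
      = primIdem Astar θs k (A (primIdem Astar θs m u)) := by
    rw [expand_apply hθs hms]
    refine Finset.sum_eq_single m (fun j _ hj => ?_) (fun h => absurd (Finset.mem_univ m) h)
    by_cases hjT : primIdem Astar θs j u = 0
    · rw [hjT, map_zero, map_zero]
    · have hlem : (m:ℕ) ≤ (j:ℕ) := Fin.le_def.mp (Finset.min'_le _ j (by simp [hjT]))
      have hjm : (j:ℕ) ≠ (m:ℕ) := fun h => hj (Fin.ext h)
      have hz := htz k j (abs_gt_one (Or.inr (by omega)))
      have := congrArg (fun f : Module.End K V => f u) hz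
      simpa using this
  have hne : (primIdem Astar θs k * A) * primIdem Astar θs m ≠ 0 :=
    hto k m (abs_eq_one' (Or.inr hkm))
  have := mul_primIdem_apply_ne_zero hθs hms hdim hne hmmem
  apply this
  have := h2.symm.trans h1
  simpa using this

lemma sandwich_ne_zero (hθ : Function.Injective θ) (hm : minpoly K A = ∏ i, (X - C (θ i)))
    (hθs : Function.Injective θs)
    (hms : minpoly K Astar = ∏ i, (X - C (θs i)))
    (htz : ∀ i j : Fin (d + 1), (1:ℤ) < |((i:ℕ):ℤ) - ((j:ℕ):ℤ)| →
      primIdem Astar θs i * A * primIdem Astar θs j = 0)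
    (hto : ∀ i j : Fin (d + 1), |((i:ℕ):ℤ) - ((j:ℕ):ℤ)| = 1 →
      primIdem Astar θs i * A * primIdem Astar θs j ≠ 0)
    (hdim : Module.finrank K V = d + 1) (a b : Fin (d + 1)) :
    primIdem A θ a * primIdem Astar θs 0 * primIdem A θ b ≠ 0 := by
  intro h0
  obtain ⟨y, hy⟩ : ∃ y, primIdem A θ b y ≠ 0 := by
    by_contra h
    push_neg at h
    exact primIdem_ne_zero hθ hm b (LinearMap.ext fun w => h w)
  set u := primIdem A θ b y with hudef
  have hueig : A u = θ b • u := by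
    have h := congrArg (fun f : Module.End K V => f y) (aeval_mul_primIdem hθ hm X b)
    simpa [aeval_X, eval_X] using h
  have hF0u : primIdem Astar θs 0 u ≠ 0 := lemB hθs hms htz hto hdim hy hueig
  set v := primIdem Astar θs 0 u with hvdef
  have hv0 : primIdem Astar θs 0 v = v := by
    rw [hvdef, primIdem_apply_primIdem hθs hms 0 0, if_pos rfl]
  have hEav : primIdem A θ a v ≠ 0 :=
    lemA hθ hm hθs hms htz hto hdim hv0 hF0u a
  apply hEav
  have := congrArg (fun f : Module.End K V => f y) h0
  simpa [hvdef, hudef] using this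

end Core

/-- If `X_0, …, X_d` is any basis of the subalgebra `D` of `End(V)` generated by `A`,
then the `(d+1)²` maps `X_r E*_0 X_s` form a basis of `End(V)`. -/
theorem stmt_4 {K V : Type*} [Field K] [AddCommGroup V] [Module K V] [FiniteDimensional K V]
    {d : ℕ} (hdim : Module.finrank K V = d + 1)
    (A Astar : Module.End K V) (θ θs : Fin (d + 1) → K)
    (hLS : IsLeonardSystem A Astar θ θs)
    (Xf : Fin (d + 1) → Module.End K V)
    (hXmem : ∀ r, Xf r ∈ Algebra.adjoin K ({A} : Set (Module.End K V)))
    (hXind : LinearIndependent K Xf)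
    (hXspan : Submodule.span K (Set.range Xf) =
      Subalgebra.toSubmodule (Algebra.adjoin K ({A} : Set (Module.End K V)))) :
    LinearIndependent K
      (fun p : Fin (d + 1) × Fin (d + 1) => Xf p.1 * primIdem Astar θs 0 * Xf p.2) ∧
    Submodule.span K
      (Set.range (fun p : Fin (d + 1) × Fin (d + 1) =>
        Xf p.1 * primIdem Astar θs 0 * Xf p.2)) = ⊤ := by
  classical
  obtain ⟨hθ, hθs, hm, hms, _hTD1, hTD2⟩ := hLS
  have htz : ∀ i j : Fin (d + 1), (1:ℤ) < |((i:ℕ):ℤ) - ((j:ℕ):ℤ)| →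
      primIdem Astar θs i * A * primIdem Astar θs j = 0 := fun i j h => (hTD2 i j).1 h
  have hto : ∀ i j : Fin (d + 1), |((i:ℕ):ℤ) - ((j:ℕ):ℤ)| = 1 →
      primIdem Astar θs i * A * primIdem Astar θs j ≠ 0 := fun i j h => (hTD2 i j).2 h
  have hZne : ∀ a b : Fin (d + 1),
      primIdem A θ a * primIdem Astar θs 0 * primIdem A θ b ≠ 0 :=
    sandwich_ne_zero hθ hm hθs hms htz hto hdim
  -- the sandwich computation
  have hsand : ∀ a b r s : Fin (d + 1),
      primIdem A θ a * (primIdem A θ r * primIdem Astar θs 0 * primIdem A θ s) * primIdem A θ b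
        = if r = a ∧ s = b then
            primIdem A θ a * primIdem Astar θs 0 * primIdem A θ b else 0 := by
    intro a b r s
    have hassoc :
        primIdem A θ a * (primIdem A θ r * primIdem Astar θs 0 * primIdem A θ s) * primIdem A θ b
          = (primIdem A θ a * primIdem A θ r) * primIdem Astar θs 0
              * (primIdem A θ s * primIdem A θ b) := by
      noncomm_ring
    rw [hassoc, primIdem_mul hθ hm a r, primIdem_mul hθ hm s b]
    by_cases h1 : a = r
    · by_cases h2 : s = b
      · rw [if_pos h1, if_pos h2, if_pos ⟨h1.symm, h2⟩, h2]
      · rw [if_pos h1, if_neg h2, if_neg (fun h : r = a ∧ s = b => h2 h.2), mul_zero]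
    · rw [if_neg h1, if_neg (fun h : r = a ∧ s = b => h1 h.1.symm), zero_mul, zero_mul]
  -- linear independence of the E_a E*_0 E_b
  have hZind : LinearIndependent K (fun p : Fin (d + 1) × Fin (d + 1) =>
      primIdem A θ p.1 * primIdem Astar θs 0 * primIdem A θ p.2) := by
    rw [Fintype.linearIndependent_iff]
    intro c hc p
    obtain ⟨a, b⟩ := p
    have h := congrArg
      (fun C : Module.End K V => primIdem A θ a * C * primIdem A θ b) hc
    simp only [mul_zero, zero_mul] at h
    rw [Finset.mul_sum, Finset.sum_mul] at h
    simp only [mul_smul_comm, smul_mul_assoc] at h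
    simp only [hsand] at h
    rw [Finset.sum_eq_single (a, b) (fun q _ hq => ?_)
      (fun hh => absurd (Finset.mem_univ (a, b)) hh)] at h
    · rw [if_pos ⟨rfl, rfl⟩] at h
      exact (smul_eq_zero.mp h).resolve_right (hZne a b)
    · rw [if_neg (fun hh => hq (Prod.ext hh.1 hh.2)), smul_zero]
  have hcard : Fintype.card (Fin (d + 1) × Fin (d + 1))
      = Module.finrank K (Module.End K V) := by
    rw [show Module.finrank K (Module.End K V) = Module.finrank K (V →ₗ[K] V) from rfl,
      Module.finrank_linearMap, hdim]
    simp
  have hZspan := hZind.span_eq_top_of_card_eq_finrank hcard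
  -- each E_a is a combination of the X_r
  have hEmem : ∀ a : Fin (d + 1), ∃ n : Fin (d + 1) → K,
      ∑ r, n r • Xf r = primIdem A θ a := by
    intro a
    have h1 : primIdem A θ a ∈ Algebra.adjoin K ({A} : Set (Module.End K V)) := by
      rw [Algebra.adjoin_singleton_eq_range_aeval]
      exact ⟨lagPoly θ a, rfl⟩
    have h2 : primIdem A θ a ∈ Submodule.span K (Set.range Xf) := by
      rw [hXspan]
      exact (Subalgebra.mem_toSubmodule _).mpr h1
    exact (Submodule.mem_span_range_iff_exists_fun K).mp h2
  choose n hn using hEmem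
  have hYspan : Submodule.span K
      (Set.range (fun p : Fin (d + 1) × Fin (d + 1) =>
        Xf p.1 * primIdem Astar θs 0 * Xf p.2)) = ⊤ := by
    rw [eq_top_iff, ← hZspan, Submodule.span_le]
    rintro _ ⟨⟨a, b⟩, rfl⟩
    have hdecomp : primIdem A θ a * primIdem Astar θs 0 * primIdem A θ b
        = ∑ r, ∑ s, (n a r * n b s) • (Xf r * primIdem Astar θs 0 * Xf s) := by
      rw [← hn a, ← hn b, Finset.sum_mul, Finset.sum_mul]
      refine Finset.sum_congr rfl fun r _ => ?_
      rw [Finset.mul_sum]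
      refine Finset.sum_congr rfl fun s _ => ?_
      rw [smul_mul_assoc, smul_mul_assoc, mul_smul_comm, smul_smul]
    rw [SetLike.mem_coe]
    show primIdem A θ a * primIdem Astar θs 0 * primIdem A θ b ∈ _
    rw [hdecomp]
    refine Submodule.sum_mem _ fun r _ => Submodule.sum_mem _ fun s _ =>
      Submodule.smul_mem _ _ ?_
    exact Submodule.subset_span ⟨(r, s), rfl⟩
  refine ⟨?_, hYspan⟩
  exact linearIndependent_of_top_le_span_of_card_eq_finrank (le_of_eq hYspan.symm) hcard
end

section
/- Let (A; θ_0,…,θ_d; A*; θ*_0,…,θ*_d) be a Leonard system on V, with primitive idempotents E_i of A and E*_i of A*. Then the (d+1)² linear maps E_r E*_0 E_s (0 ≤ r,s ≤ d) form a basis of End(V). -/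
open Polynomial Finset

namespace LeonardAux

variable {K V : Type*} [Field K] [AddCommGroup V] [Module K V] {d : ℕ}
variable {A : Module.End K V} {θ : Fin (d + 1) → K}

lemma primIdem_eq (A : Module.End K V) (θ : Fin (d + 1) → K) (i : Fin (d + 1)) :
    primIdem A θ i = aeval A (Lagrange.basis Finset.univ θ i) := rfl

section basic

variable (hθ : Function.Injective θ) (hmin : minpoly K A = ∏ i, (X - C (θ i)))
include hθ

lemma aeval_eq_zero_of_roots (hmin : minpoly K A = ∏ i, (X - C (θ i)))
    (p : K[X]) (hp : ∀ i, p.eval (θ i) = 0) : aeval A p = 0 := by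
  have hdvd : (∏ i, (X - C (θ i))) ∣ p :=
    Fintype.prod_dvd_of_coprime (pairwise_coprime_X_sub_C hθ)
      (fun i => dvd_iff_isRoot.mpr (hp i))
  obtain ⟨q, rfl⟩ := hdvd
  rw [map_mul, ← hmin, minpoly.aeval, zero_mul]

lemma primIdem_mul_primIdem (hmin : minpoly K A = ∏ i, (X - C (θ i))) (i j : Fin (d + 1)) :
    primIdem A θ i * primIdem A θ j = if i = j then primIdem A θ i else 0 := by
  rcases eq_or_ne i j with rfl | hij
  · simp only [if_pos rfl]
    have h0 : aeval A (Lagrange.basis univ θ i * Lagrange.basis univ θ i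
        - Lagrange.basis univ θ i) = 0 := by
      apply aeval_eq_zero_of_roots hθ hmin
      intro k
      rcases eq_or_ne i k with rfl | hik
      · simp [Lagrange.eval_basis_self hθ.injOn (mem_univ i)]
      · simp [Lagrange.eval_basis_of_ne hik (mem_univ k)]
    rw [map_sub, map_mul] at h0
    rw [primIdem_eq]
    exact sub_eq_zero.mp h0
  · simp only [if_neg hij]
    rw [primIdem_eq, primIdem_eq, ← map_mul]
    apply aeval_eq_zero_of_roots hθ hmin
    intro k
    rcases eq_or_ne i k with rfl | hik
    · simp [Lagrange.eval_basis_of_ne hij.symm (mem_univ i)]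
    · simp [Lagrange.eval_basis_of_ne hik (mem_univ k)]

lemma sum_primIdem (hmin : minpoly K A = ∏ i, (X - C (θ i))) :
    ∑ i, primIdem A θ i = 1 := by
  have h := Lagrange.sum_basis hθ.injOn (univ_nonempty (α := Fin (d + 1)))
  calc ∑ i, primIdem A θ i = aeval A (∑ i, Lagrange.basis univ θ i) := by
        simp only [primIdem_eq, map_sum]
    _ = 1 := by rw [h, map_one]

lemma A_mul_primIdem (hmin : minpoly K A = ∏ i, (X - C (θ i))) (i : Fin (d + 1)) :
    A * primIdem A θ i = θ i • primIdem A θ i := by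
  have h0 : aeval A ((X - C (θ i)) * Lagrange.basis univ θ i) = 0 := by
    apply aeval_eq_zero_of_roots hθ hmin
    intro k
    rcases eq_or_ne i k with rfl | hik
    · simp
    · simp [Lagrange.eval_basis_of_ne hik (mem_univ k)]
  rw [map_mul, map_sub, aeval_X, aeval_C, sub_mul] at h0
  rw [primIdem_eq, Algebra.smul_def]
  exact sub_eq_zero.mp h0

lemma primIdem_mul_A (hmin : minpoly K A = ∏ i, (X - C (θ i))) (i : Fin (d + 1)) :
    primIdem A θ i * A = θ i • primIdem A θ i := by
  rw [← A_mul_primIdem hθ hmin i, primIdem_eq]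
  calc aeval A (Lagrange.basis univ θ i) * A
      = aeval A (Lagrange.basis univ θ i * X) := by rw [map_mul, aeval_X]
    _ = aeval A (X * Lagrange.basis univ θ i) := by rw [mul_comm]
    _ = A * aeval A (Lagrange.basis univ θ i) := by rw [map_mul, aeval_X]

lemma primIdem_ne_zero (hmin : minpoly K A = ∏ i, (X - C (θ i))) (i : Fin (d + 1)) :
    primIdem A θ i ≠ 0 := by
  intro h
  have hdvd : minpoly K A ∣ Lagrange.basis univ θ i := minpoly.dvd K A h
  have hne : Lagrange.basis univ θ i ≠ 0 := Lagrange.basis_ne_zero hθ.injOn (mem_univ i)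
  have hdeg := Polynomial.natDegree_le_of_dvd hdvd hne
  rw [hmin] at hdeg
  have h1 : (∏ i, (X - C (θ i))).natDegree = d + 1 := by
    rw [natDegree_prod _ _ (fun k _ => X_sub_C_ne_zero (θ k))]
    simp
  have h2 : (Lagrange.basis univ θ i).natDegree = d := by
    rw [Lagrange.natDegree_basis hθ.injOn (mem_univ i)]
    simp
  omega

end basic

section rank

variable [FiniteDimensional K V]

lemma exists_smul_of_rank_one {T : Module.End K V}
    (hT : Module.finrank K (LinearMap.range T) = 1)
    {x y : V} (hx : x ∈ LinearMap.range T) (hy : y ∈ LinearMap.range T) (hx0 : x ≠ 0) :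
    ∃ c : K, y = c • x := by
  have h1 : Submodule.span K {x} ≤ LinearMap.range T := by
    rw [Submodule.span_le, Set.singleton_subset_iff]; exact hx
  have h2 : Submodule.span K {x} = LinearMap.range T :=
    Submodule.eq_of_le_of_finrank_le h1 (by rw [finrank_span_singleton hx0, hT])
  rw [← h2] at hy
  obtain ⟨c, hc⟩ := Submodule.mem_span_singleton.mp hy
  exact ⟨c, hc.symm⟩

variable (hθ : Function.Injective θ) (hmin : minpoly K A = ∏ i, (X - C (θ i)))
  (hdim : Module.finrank K V = d + 1)
include hθ hmin hdim

lemma finrank_range_primIdem (i : Fin (d + 1)) :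
    Module.finrank K (LinearMap.range (primIdem A θ i)) = 1 := by
  classical
  have hex : ∀ j : Fin (d + 1), ∃ z : V, primIdem A θ j z ≠ 0 := by
    intro j
    by_contra hc
    push_neg at hc
    exact primIdem_ne_zero hθ hmin j (LinearMap.ext fun z => hc z)
  choose z hz using hex
  set w : Fin (d + 1) → V := fun j => primIdem A θ j (z j) with hw
  have hwk : ∀ k j, primIdem A θ k (w j) = if k = j then w j else 0 := by
    intro k j
    have h : primIdem A θ k (primIdem A θ j (z j)) = (primIdem A θ k * primIdem A θ j) (z j) := rfl
    rw [hw]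
    simp only [h, primIdem_mul_primIdem hθ hmin]
    rcases eq_or_ne k j with rfl | hkj
    · simp
    · simp [hkj]
  have hwnz : ∀ j, w j ≠ 0 := fun j => hz j
  have hindep : LinearIndependent K w := by
    rw [Fintype.linearIndependent_iff]
    intro g hg k
    have h1 := congrArg (primIdem A θ k) hg
    rw [map_sum, map_zero] at h1
    simp only [map_smul, hwk, smul_ite, smul_zero] at h1
    rw [Finset.sum_ite_eq univ k (fun j => g j • w j), if_pos (mem_univ k)] at h1
    exact (smul_eq_zero.mp h1).resolve_right (hwnz k)
  have hker : d ≤ Module.finrank K (LinearMap.ker (primIdem A θ i)) := by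
    have hmem : ∀ j : {j : Fin (d + 1) // j ≠ i}, w j.1 ∈ LinearMap.ker (primIdem A θ i) := by
      intro j
      rw [LinearMap.mem_ker, hwk i j.1, if_neg (Ne.symm j.2)]
    have hind2 : LinearIndependent K (fun j : {j : Fin (d + 1) // j ≠ i} =>
        (⟨w j.1, hmem j⟩ : LinearMap.ker (primIdem A θ i))) := by
      apply LinearIndependent.of_comp (LinearMap.ker (primIdem A θ i)).subtype
      exact hindep.comp Subtype.val Subtype.val_injective
    have hcard := hind2.fintype_card_le_finrank
    have hc2 : Fintype.card {j : Fin (d + 1) // j ≠ i} = d := by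
      simp [Fintype.card_subtype_compl]
    rwa [hc2] at hcard
  have hrn := LinearMap.finrank_range_add_finrank_ker (primIdem A θ i)
  rw [hdim] at hrn
  have hge : 1 ≤ Module.finrank K (LinearMap.range (primIdem A θ i)) := by
    have hsp : Submodule.span K {w i} ≤ LinearMap.range (primIdem A θ i) := by
      rw [Submodule.span_le, Set.singleton_subset_iff]
      exact ⟨z i, rfl⟩
    have hm := Submodule.finrank_mono hsp
    rwa [finrank_span_singleton (hwnz i)] at hm
  omega

end rank

section key

variable [FiniteDimensional K V]
variable {Astar : Module.End K V} {θs : Fin (d + 1) → K}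

lemma key_left (hθ : Function.Injective θ) (hmin : minpoly K A = ∏ i, (X - C (θ i)))
    (hθs : Function.Injective θs) (hmins : minpoly K Astar = ∏ i, (X - C (θs i)))
    (hdim : Module.finrank K V = d + 1)
    (htri : ∀ i j : Fin (d + 1),
      ((1 : ℤ) < |((i : ℕ) : ℤ) - ((j : ℕ) : ℤ)| →
        primIdem Astar θs i * A * primIdem Astar θs j = 0) ∧
      (|((i : ℕ) : ℤ) - ((j : ℕ) : ℤ)| = 1 →
        primIdem Astar θs i * A * primIdem Astar θs j ≠ 0))
    (r : Fin (d + 1)) : primIdem A θ r * primIdem Astar θs 0 ≠ 0 := by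
  intro h0
  have hmain : ∀ n : ℕ, ∀ k : ℕ, k ≤ n → ∀ hk : k < d + 1,
      primIdem A θ r * primIdem Astar θs ⟨k, hk⟩ = 0 := by
    intro n
    induction n with
    | zero =>
      intro k hk0 hklt
      obtain rfl : k = 0 := Nat.le_zero.mp hk0
      have he : (⟨0, hklt⟩ : Fin (d + 1)) = 0 := Fin.ext rfl
      rw [he]
      exact h0
    | succ m ih =>
      intro k hkm hk
      rcases Nat.lt_or_ge k (m + 1) with h | h
      · exact ih k (Nat.lt_succ_iff.mp h) hk
      obtain rfl : k = m + 1 := le_antisymm hkm h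
      have hmlt : m < d + 1 := by omega
      have h1 : primIdem A θ r * A * primIdem Astar θs ⟨m, hmlt⟩ = 0 := by
        rw [primIdem_mul_A hθ hmin r, smul_mul_assoc, ih m le_rfl hmlt, smul_zero]
      have h2 : primIdem A θ r * A * primIdem Astar θs ⟨m, hmlt⟩
          = ∑ i : Fin (d + 1), primIdem A θ r * primIdem Astar θs i
              * (A * primIdem Astar θs ⟨m, hmlt⟩) := by
        calc primIdem A θ r * A * primIdem Astar θs ⟨m, hmlt⟩
            = primIdem A θ r * (1 * (A * primIdem Astar θs ⟨m, hmlt⟩)) := by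
              rw [one_mul, mul_assoc]
          _ = primIdem A θ r * ((∑ i, primIdem Astar θs i)
                * (A * primIdem Astar θs ⟨m, hmlt⟩)) := by
              rw [sum_primIdem hθs hmins]
          _ = ∑ i : Fin (d + 1), primIdem A θ r * primIdem Astar θs i
                * (A * primIdem Astar θs ⟨m, hmlt⟩) := by
              rw [Finset.sum_mul, Finset.mul_sum]
              exact Finset.sum_congr rfl (fun i _ => by rw [← mul_assoc])
      have h3 : ∀ i : Fin (d + 1), i ∈ Finset.univ → i ≠ ⟨m + 1, hk⟩ →
          primIdem A θ r * primIdem Astar θs i * (A * primIdem Astar θs ⟨m, hmlt⟩) = 0 := by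
        intro i _ hne
        rcases Nat.lt_or_ge (i : ℕ) (m + 1) with hle | hgt
        · rw [show primIdem Astar θs i = primIdem Astar θs ⟨(i : ℕ), i.2⟩ from by rw [Fin.eta],
            ih i (Nat.lt_succ_iff.mp hle) i.2, zero_mul]
        · have hgt2 : m + 1 < (i : ℕ) := by
            rcases Nat.lt_or_ge (m + 1) (i : ℕ) with h' | h'
            · exact h'
            · exact absurd (Fin.ext (le_antisymm h' hgt)) hne
          have habs : (1 : ℤ) < |(((i : Fin (d+1)) : ℕ) : ℤ)
              - (((⟨m, hmlt⟩ : Fin (d + 1)) : ℕ) : ℤ)| := by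
            simp only [Fin.val_mk]
            rw [abs_of_nonneg (by push_cast; omega)]
            push_cast
            omega
          rw [mul_assoc, ← mul_assoc (primIdem Astar θs i) A (primIdem Astar θs ⟨m, hmlt⟩),
            (htri i ⟨m, hmlt⟩).1 habs, mul_zero]
      have h4 : primIdem A θ r * primIdem Astar θs ⟨m + 1, hk⟩
          * (A * primIdem Astar θs ⟨m, hmlt⟩) = 0 := by
        have hs := Finset.sum_eq_single_of_mem (s := Finset.univ)
          (f := fun i => primIdem A θ r * primIdem Astar θs i
            * (A * primIdem Astar θs ⟨m, hmlt⟩))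
          (⟨m + 1, hk⟩ : Fin (d + 1)) (Finset.mem_univ _) h3
        rw [← hs, ← h2]
        exact h1
      have habs1 : |(((⟨m + 1, hk⟩ : Fin (d + 1)) : ℕ) : ℤ)
          - (((⟨m, hmlt⟩ : Fin (d + 1)) : ℕ) : ℤ)| = 1 := by
        simp only [Fin.val_mk]
        rw [show (((m + 1 : ℕ) : ℤ)) - ((m : ℕ) : ℤ) = 1 by push_cast; ring]
        exact abs_one
      have hT : primIdem Astar θs ⟨m + 1, hk⟩ * A * primIdem Astar θs ⟨m, hmlt⟩ ≠ 0 :=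
        (htri ⟨m + 1, hk⟩ ⟨m, hmlt⟩).2 habs1
      have h5 : primIdem A θ r
          * (primIdem Astar θs ⟨m + 1, hk⟩ * A * primIdem Astar θs ⟨m, hmlt⟩) = 0 := by
        rw [mul_assoc (primIdem Astar θs ⟨m + 1, hk⟩) A (primIdem Astar θs ⟨m, hmlt⟩),
          ← mul_assoc (primIdem A θ r) (primIdem Astar θs ⟨m + 1, hk⟩) _]
        exact h4
      have hrank := finrank_range_primIdem hθs hmins hdim (⟨m + 1, hk⟩ : Fin (d + 1))
      obtain ⟨y, hy⟩ : ∃ y, (primIdem Astar θs ⟨m + 1, hk⟩ * A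
          * primIdem Astar θs ⟨m, hmlt⟩) y ≠ 0 := by
        by_contra hc
        push_neg at hc
        exact hT (LinearMap.ext hc)
      ext x
      simp only [Module.End.mul_apply, LinearMap.zero_apply]
      have hxmem : primIdem Astar θs ⟨m + 1, hk⟩ x
          ∈ LinearMap.range (primIdem Astar θs ⟨m + 1, hk⟩) := ⟨x, rfl⟩
      have hymem : (primIdem Astar θs ⟨m + 1, hk⟩ * A * primIdem Astar θs ⟨m, hmlt⟩) y
          ∈ LinearMap.range (primIdem Astar θs ⟨m + 1, hk⟩) := by
        exact ⟨(A * primIdem Astar θs ⟨m, hmlt⟩) y, by simp [Module.End.mul_apply]⟩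
      obtain ⟨c, hc⟩ := exists_smul_of_rank_one hrank hymem hxmem hy
      rw [hc, map_smul]
      have hz : primIdem A θ r ((primIdem Astar θs ⟨m + 1, hk⟩ * A
          * primIdem Astar θs ⟨m, hmlt⟩) y) = 0 := by
        have h6 := congrArg (fun T : Module.End K V => T y) h5
        simpa [Module.End.mul_apply] using h6
      rw [hz, smul_zero]
  have hzero : primIdem A θ r = 0 := by
    have h1 : primIdem A θ r = primIdem A θ r * (∑ j, primIdem Astar θs j) := by
      rw [sum_primIdem hθs hmins, mul_one]
    rw [h1, Finset.mul_sum]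
    apply Finset.sum_eq_zero
    intro j _
    have hm := hmain j.1 j.1 le_rfl j.2
    simpa [Fin.eta] using hm
  exact primIdem_ne_zero hθ hmin r hzero

lemma key_right (hθ : Function.Injective θ) (hmin : minpoly K A = ∏ i, (X - C (θ i)))
    (hθs : Function.Injective θs) (hmins : minpoly K Astar = ∏ i, (X - C (θs i)))
    (hdim : Module.finrank K V = d + 1)
    (htri : ∀ i j : Fin (d + 1),
      ((1 : ℤ) < |((i : ℕ) : ℤ) - ((j : ℕ) : ℤ)| →
        primIdem Astar θs i * A * primIdem Astar θs j = 0) ∧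
      (|((i : ℕ) : ℤ) - ((j : ℕ) : ℤ)| = 1 →
        primIdem Astar θs i * A * primIdem Astar θs j ≠ 0))
    (s : Fin (d + 1)) : primIdem Astar θs 0 * primIdem A θ s ≠ 0 := by
  intro h0
  have hmain : ∀ n : ℕ, ∀ k : ℕ, k ≤ n → ∀ hk : k < d + 1,
      primIdem Astar θs ⟨k, hk⟩ * primIdem A θ s = 0 := by
    intro n
    induction n with
    | zero =>
      intro k hk0 hklt
      obtain rfl : k = 0 := Nat.le_zero.mp hk0
      have he : (⟨0, hklt⟩ : Fin (d + 1)) = 0 := Fin.ext rfl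
      rw [he]
      exact h0
    | succ m ih =>
      intro k hkm hk
      rcases Nat.lt_or_ge k (m + 1) with h | h
      · exact ih k (Nat.lt_succ_iff.mp h) hk
      obtain rfl : k = m + 1 := le_antisymm hkm h
      have hmlt : m < d + 1 := by omega
      have h1 : primIdem Astar θs ⟨m, hmlt⟩ * A * primIdem A θ s = 0 := by
        rw [mul_assoc, A_mul_primIdem hθ hmin s, mul_smul_comm, ih m le_rfl hmlt, smul_zero]
      have h2 : primIdem Astar θs ⟨m, hmlt⟩ * A * primIdem A θ s
          = ∑ i : Fin (d + 1), primIdem Astar θs ⟨m, hmlt⟩ * A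
              * (primIdem Astar θs i * primIdem A θ s) := by
        calc primIdem Astar θs ⟨m, hmlt⟩ * A * primIdem A θ s
            = primIdem Astar θs ⟨m, hmlt⟩ * A * (1 * primIdem A θ s) := by rw [one_mul]
          _ = primIdem Astar θs ⟨m, hmlt⟩ * A
                * ((∑ i, primIdem Astar θs i) * primIdem A θ s) := by
              rw [sum_primIdem hθs hmins]
          _ = ∑ i : Fin (d + 1), primIdem Astar θs ⟨m, hmlt⟩ * A
                * (primIdem Astar θs i * primIdem A θ s) := by
              rw [Finset.sum_mul, Finset.mul_sum]
      have h3 : ∀ i : Fin (d + 1), i ∈ Finset.univ → i ≠ ⟨m + 1, hk⟩ →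
          primIdem Astar θs ⟨m, hmlt⟩ * A * (primIdem Astar θs i * primIdem A θ s) = 0 := by
        intro i _ hne
        rcases Nat.lt_or_ge (i : ℕ) (m + 1) with hle | hgt
        · rw [show primIdem Astar θs i = primIdem Astar θs ⟨(i : ℕ), i.2⟩ from by rw [Fin.eta],
            ih i (Nat.lt_succ_iff.mp hle) i.2, mul_zero]
        · have hgt2 : m + 1 < (i : ℕ) := by
            rcases Nat.lt_or_ge (m + 1) (i : ℕ) with h' | h'
            · exact h'
            · exact absurd (Fin.ext (le_antisymm h' hgt)) hne
          have habs : (1 : ℤ) < |(((⟨m, hmlt⟩ : Fin (d + 1)) : ℕ) : ℤ)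
              - (((i : Fin (d+1)) : ℕ) : ℤ)| := by
            simp only [Fin.val_mk]
            rw [abs_of_nonpos (by omega)]
            omega
          rw [← mul_assoc, (htri ⟨m, hmlt⟩ i).1 habs, zero_mul]
      have h4 : primIdem Astar θs ⟨m, hmlt⟩ * A
          * (primIdem Astar θs ⟨m + 1, hk⟩ * primIdem A θ s) = 0 := by
        have hs := Finset.sum_eq_single_of_mem (s := Finset.univ)
          (f := fun i => primIdem Astar θs ⟨m, hmlt⟩ * A
            * (primIdem Astar θs i * primIdem A θ s))
          (⟨m + 1, hk⟩ : Fin (d + 1)) (Finset.mem_univ _) h3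
        rw [← hs, ← h2]
        exact h1
      have habs1 : |(((⟨m, hmlt⟩ : Fin (d + 1)) : ℕ) : ℤ)
          - (((⟨m + 1, hk⟩ : Fin (d + 1)) : ℕ) : ℤ)| = 1 := by
        simp only [Fin.val_mk]
        rw [show ((m : ℕ) : ℤ) - (((m + 1 : ℕ)) : ℤ) = -1 by push_cast; ring]
        simp
      have hT : primIdem Astar θs ⟨m, hmlt⟩ * A * primIdem Astar θs ⟨m + 1, hk⟩ ≠ 0 :=
        (htri ⟨m, hmlt⟩ ⟨m + 1, hk⟩).2 habs1
      have hrank := finrank_range_primIdem hθs hmins hdim (⟨m + 1, hk⟩ : Fin (d + 1))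
      ext x
      simp only [Module.End.mul_apply, LinearMap.zero_apply]
      by_contra hu
      apply hT
      ext w
      have humem : primIdem Astar θs ⟨m + 1, hk⟩ (primIdem A θ s x)
          ∈ LinearMap.range (primIdem Astar θs ⟨m + 1, hk⟩) := ⟨_, rfl⟩
      have hwmem : primIdem Astar θs ⟨m + 1, hk⟩ w
          ∈ LinearMap.range (primIdem Astar θs ⟨m + 1, hk⟩) := ⟨w, rfl⟩
      obtain ⟨c, hc⟩ := exists_smul_of_rank_one hrank humem hwmem hu
      have hTu : primIdem Astar θs ⟨m, hmlt⟩
          (A (primIdem Astar θs ⟨m + 1, hk⟩ (primIdem A θ s x))) = 0 := by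
        have h6 := congrArg (fun T : Module.End K V => T x) h4
        simpa [Module.End.mul_apply] using h6
      simp only [Module.End.mul_apply, LinearMap.zero_apply]
      rw [hc, map_smul, map_smul, hTu, smul_zero]
  have hzero : primIdem A θ s = 0 := by
    have h1 : primIdem A θ s = (∑ j, primIdem Astar θs j) * primIdem A θ s := by
      rw [sum_primIdem hθs hmins, one_mul]
    rw [h1, Finset.sum_mul]
    apply Finset.sum_eq_zero
    intro j _
    have hm := hmain j.1 j.1 le_rfl j.2
    simpa [Fin.eta] using hm
  exact primIdem_ne_zero hθ hmin s hzero

lemma key_both (hθ : Function.Injective θ) (hmin : minpoly K A = ∏ i, (X - C (θ i)))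
    (hθs : Function.Injective θs) (hmins : minpoly K Astar = ∏ i, (X - C (θs i)))
    (hdim : Module.finrank K V = d + 1)
    (htri : ∀ i j : Fin (d + 1),
      ((1 : ℤ) < |((i : ℕ) : ℤ) - ((j : ℕ) : ℤ)| →
        primIdem Astar θs i * A * primIdem Astar θs j = 0) ∧
      (|((i : ℕ) : ℤ) - ((j : ℕ) : ℤ)| = 1 →
        primIdem Astar θs i * A * primIdem Astar θs j ≠ 0))
    (p q : Fin (d + 1)) :
    primIdem A θ p * primIdem Astar θs 0 * primIdem A θ q ≠ 0 := by
  intro h0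
  obtain ⟨x, hx⟩ : ∃ x, primIdem Astar θs 0 (primIdem A θ q x) ≠ 0 := by
    by_contra hc
    push_neg at hc
    exact key_right hθ hmin hθs hmins hdim htri q
      (LinearMap.ext fun x => by simpa [Module.End.mul_apply] using hc x)
  obtain ⟨y, hy⟩ : ∃ y, primIdem A θ p (primIdem Astar θs 0 y) ≠ 0 := by
    by_contra hc
    push_neg at hc
    exact key_left hθ hmin hθs hmins hdim htri p
      (LinearMap.ext fun y => by simpa [Module.End.mul_apply] using hc y)
  have hrank := finrank_range_primIdem hθs hmins hdim (0 : Fin (d + 1))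
  have humem : primIdem Astar θs 0 (primIdem A θ q x)
      ∈ LinearMap.range (primIdem Astar θs 0) := ⟨_, rfl⟩
  have hymem : primIdem Astar θs 0 y ∈ LinearMap.range (primIdem Astar θs 0) := ⟨y, rfl⟩
  obtain ⟨c, hc⟩ := exists_smul_of_rank_one hrank humem hymem hx
  have hEpu : primIdem A θ p (primIdem Astar θs 0 (primIdem A θ q x)) ≠ 0 := by
    intro hz
    apply hy
    rw [hc, map_smul, hz, smul_zero]
  apply hEpu
  have h6 := congrArg (fun T : Module.End K V => T x) h0
  simpa [Module.End.mul_apply] using h6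

end key

end LeonardAux

/-- The `(d+1)²` linear maps `E_r E*_0 E_s` (`0 ≤ r,s ≤ d`) form a basis of `End(V)`. -/
theorem stmt_5 {K V : Type*} [Field K] [AddCommGroup V] [Module K V] [FiniteDimensional K V]
    {d : ℕ} (hdim : Module.finrank K V = d + 1)
    (A Astar : Module.End K V) (θ θs : Fin (d + 1) → K)
    (hLS : IsLeonardSystem A Astar θ θs) :
    LinearIndependent K
      (fun p : Fin (d + 1) × Fin (d + 1) =>
        primIdem A θ p.1 * primIdem Astar θs 0 * primIdem A θ p.2) ∧
    Submodule.span K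
      (Set.range (fun p : Fin (d + 1) × Fin (d + 1) =>
        primIdem A θ p.1 * primIdem Astar θs 0 * primIdem A θ p.2)) = ⊤ := by
  classical
  obtain ⟨hθ, hθs, hmin, hmins, htri1, htri2⟩ := hLS
  have hne : ∀ p q : Fin (d + 1),
      primIdem A θ p * primIdem Astar θs 0 * primIdem A θ q ≠ 0 :=
    fun p q => LeonardAux.key_both hθ hmin hθs hmins hdim htri2 p q
  have hEE : ∀ i j : Fin (d + 1),
      primIdem A θ i * primIdem A θ j = if i = j then primIdem A θ i else 0 :=
    LeonardAux.primIdem_mul_primIdem hθ hmin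
  have hindep : LinearIndependent K
      (fun p : Fin (d + 1) × Fin (d + 1) =>
        primIdem A θ p.1 * primIdem Astar θs 0 * primIdem A θ p.2) := by
    rw [Fintype.linearIndependent_iff]
    rintro g hg ⟨p, q⟩
    have key : ∀ x : Fin (d + 1) × Fin (d + 1),
        primIdem A θ p * (g x • (primIdem A θ x.1 * primIdem Astar θs 0 * primIdem A θ x.2))
          * primIdem A θ q
        = if x = (p, q) then
            g x • (primIdem A θ p * primIdem Astar θs 0 * primIdem A θ q) else 0 := by
      intro x
      rcases eq_or_ne x (p, q) with rfl | hne'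
      · simp only [if_pos rfl]
        rw [mul_smul_comm, smul_mul_assoc]
        congr 1
        have hass : primIdem A θ p * (primIdem A θ p * primIdem Astar θs 0 * primIdem A θ q)
            * primIdem A θ q
            = (primIdem A θ p * primIdem A θ p) * primIdem Astar θs 0
              * (primIdem A θ q * primIdem A θ q) := by
          noncomm_ring
        rw [hass, hEE p p, hEE q q, if_pos rfl, if_pos rfl]
      · simp only [if_neg hne']
        rw [mul_smul_comm, smul_mul_assoc]
        have hass : primIdem A θ p * (primIdem A θ x.1 * primIdem Astar θs 0 * primIdem A θ x.2)
            * primIdem A θ q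
            = (primIdem A θ p * primIdem A θ x.1) * primIdem Astar θs 0
              * (primIdem A θ x.2 * primIdem A θ q) := by
          noncomm_ring
        have hcases : x.1 ≠ p ∨ x.2 ≠ q := by
          by_contra hc
          push_neg at hc
          exact hne' (Prod.ext hc.1 hc.2)
        rcases hcases with h | h
        · rw [hass, hEE p x.1, if_neg (fun hh => h hh.symm), zero_mul, zero_mul, smul_zero]
        · rw [hass, hEE x.2 q, if_neg h, mul_zero, smul_zero]
    have hg2 := congrArg
      (fun T : Module.End K V => primIdem A θ p * T * primIdem A θ q) hg
    rw [Finset.mul_sum, Finset.sum_mul] at hg2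
    have hsum : ∑ x : Fin (d + 1) × Fin (d + 1),
        primIdem A θ p * (g x • (primIdem A θ x.1 * primIdem Astar θs 0 * primIdem A θ x.2))
          * primIdem A θ q
        = g (p, q) • (primIdem A θ p * primIdem Astar θs 0 * primIdem A θ q) := by
      rw [Finset.sum_congr rfl (fun x _ => key x), Finset.sum_ite_eq' Finset.univ (p, q)
        (fun x => g x • (primIdem A θ p * primIdem Astar θs 0 * primIdem A θ q)),
        if_pos (Finset.mem_univ _)]
    rw [hsum, mul_zero, zero_mul] at hg2
    exact (smul_eq_zero.mp hg2).resolve_right (hne p q)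
  refine ⟨hindep, ?_⟩
  apply hindep.span_eq_top_of_card_eq_finrank
  rw [Fintype.card_prod, Fintype.card_fin,
    show Module.finrank K (Module.End K V) = Module.finrank K V * Module.finrank K V from
      Module.finrank_linearMap K K V V, hdim]
end
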